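/- arXiv:2305.01354 — 6 statements merged into one kernel-verified Lean document; each statement's English description precedes it below -/
import Mathlib

section
/- (Harnack inequality) Let b be a connected graph over X and c a potential such that H = H_{b,c} is R-invariant for a subgroup R of a group G acting on X. Then for all x, y ∈ X there exists a constant C_{x,y} > 0 such that T_g f(x) ≥ C_{x,y} · T_g f(y) holds for every nonnegative, not identically zero, superharmonic function f and every g ∈ R. -/
open MeasureTheory
open scoped BigOperators

noncomputable section

namespace GraphPaper

variable {X : Type*}

/-- The Schrödinger operator `H_{b,c}` of a graph `(b,c)` over `X`. -/
def schrodinger (b : X → X → ℝ) (c : X → ℝ) (f : X → ℝ) : X → ℝ :=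
  fun x => (∑' y, b x y * (f x - f y)) + c x * f x

/-- Membership of `f` in the domain of `H_{b,c}`. -/
def InDom (b : X → X → ℝ) (f : X → ℝ) : Prop :=
  ∀ x, Summable fun y => b x y * |f y|

/-- The graph `b` is connected: any two points are joined by a path of positive weights. -/
def Connected (b : X → X → ℝ) : Prop :=
  ∀ x y : X, Relation.ReflTransGen (fun u v => 0 < b u v) x y

/-- The degree `deg(x) = ∑_y b(x,y) + c(x)`. -/
def deg (b : X → X → ℝ) (c : X → ℝ) (x : X) : ℝ :=
  (∑' y, b x y) + c x

variable {G : Type*} [Group G] [MulAction G X]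

/-- The shift `T_g f (x) = f (g⁻¹ x)`. -/
def shift (g : G) (f : X → ℝ) : X → ℝ := fun x => f (g⁻¹ • x)

/-- `H_{b,c}` is invariant under the shifts by elements of a set `R ⊆ G`. -/
def HInvOn (b : X → X → ℝ) (c : X → ℝ) (R : Set G) : Prop :=
  ∀ g ∈ R, ∀ f : X → ℝ, InDom b f →
    InDom b (shift g f) ∧ schrodinger b c (shift g f) = shift g (schrodinger b c f)

/-- The action of `G` on `X` is cocompact: there is a finite `V` with `G V = X`. -/
def CocompactAction (G X : Type*) [Group G] [MulAction G X] : Prop :=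
  ∃ V : Finset X, ∀ x : X, ∃ g : G, ∃ v ∈ V, x = g • v

/-- The set `𝓗⁺` of nonnegative, not identically zero, harmonic functions. -/
def Hplus (b : X → X → ℝ) (c : X → ℝ) : Set (X → ℝ) :=
  {f | InDom b f ∧ schrodinger b c f = 0 ∧ (∀ x, 0 ≤ f x) ∧ f ≠ 0}

/-- The set `𝓚`: the closure of the normalized positive harmonic functions. -/
def Kset (b : X → X → ℝ) (c : X → ℝ) (x₀ : X) : Set (X → ℝ) :=
  closure {f : X → ℝ | f ∈ Hplus b c ∧ f x₀ = 1}

/-- The set `𝓚^R` of `R`-invariant elements of `𝓚`. -/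
def KsetR (b : X → X → ℝ) (c : X → ℝ) (x₀ : X) (R : Set G) : Set (X → ℝ) :=
  {f ∈ Kset b c x₀ | ∀ g ∈ R, shift g f = f}

/-- `f` is `G`-multiplicative with a character `γ ∈ Hom(G, ℝ_{>0})`. -/
def IsMultiplicative (G : Type*) [Group G] [MulAction G X] (f : X → ℝ) : Prop :=
  ∃ γ : G →* ℝ, (∀ g, 0 < γ g) ∧ ∀ g : G, shift g f = γ g⁻¹ • f

/-- `Q(R) = π⁻¹(Z(G/R))`, the preimage of the centre of `G/R`. -/
def Qsub (R : Subgroup G) [R.Normal] : Subgroup G :=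
  (Subgroup.center (G ⧸ R)).comap (QuotientGroup.mk' R)

/-- The set `𝓜` of multiplicative elements of `𝓚`. -/
def Mset (G : Type*) [Group G] [MulAction G X] (b : X → X → ℝ) (c : X → ℝ) (x₀ : X) :
    Set (X → ℝ) :=
  {f ∈ Kset b c x₀ | IsMultiplicative G f}

/-- The set `𝓚_λ` for the graph `(b, c - λ)`, i.e. for `λ`-harmonic functions. -/
def KsetLam (b : X → X → ℝ) (c : X → ℝ) (x₀ : X) (l : ℝ) : Set (X → ℝ) :=
  closure {f : X → ℝ | InDom b f ∧ (schrodinger b c f = fun x => l * f x) ∧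
    (∀ x, 0 ≤ f x) ∧ f ≠ 0 ∧ f x₀ = 1}

/-- The set `𝓜_λ` of multiplicative elements of `𝓚_λ`. -/
def MsetLam (G : Type*) [Group G] [MulAction G X] (b : X → X → ℝ) (c : X → ℝ) (x₀ : X)
    (l : ℝ) : Set (X → ℝ) :=
  {f ∈ KsetLam b c x₀ l | IsMultiplicative G f}


/-! Superharmonicity at `x` bounds `∑_y b(x,y) f(y)` by `deg(x) f(x)`, so along an edge
`b(x,y) f(y) ≤ (|deg x| + 1) f(x)` with a constant that does not depend on `f`. Multiplying these
constants along a path from `x` to `y` gives the Harnack constant, and by `R`-invariance of `H`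
the shifts `T_g f`, `g ∈ R`, are again nonnegative superharmonic, so the same constant serves them. -/

structure IsNonnegSuperharmonic (b : X → X → ℝ) (c : X → ℝ) (f : X → ℝ) : Prop where
  inDom : InDom b f
  superharmonic : ∀ x, 0 ≤ schrodinger b c f x
  nonneg : ∀ x, 0 ≤ f x

section

variable {b : X → X → ℝ} {c : X → ℝ} {f : X → ℝ}

theorem InDom.summable_mul_of_nonneg (hf : InDom b f) (hf0 : ∀ x, 0 ≤ f x) (x : X) :
    Summable fun y => b x y * f y :=
  (hf x).congr fun y => by rw [abs_of_nonneg (hf0 y)]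

theorem IsNonnegSuperharmonic.tsum_mul_le_deg_mul (hbs : ∀ x, Summable (b x))
    (hf : IsNonnegSuperharmonic b c f) (x : X) :
    ∑' y, b x y * f y ≤ deg b c x * f x := by
  have hsplit : ∑' y, b x y * (f x - f y) = (∑' y, b x y) * f x - ∑' y, b x y * f y := by
    rw [← tsum_mul_right,
      ← ((hbs x).mul_right _).tsum_sub (hf.inDom.summable_mul_of_nonneg hf.nonneg x)]
    simp only [mul_sub]
  have hHf := hf.superharmonic x
  simp only [schrodinger, hsplit] at hHf
  rw [deg]
  linarith

theorem IsNonnegSuperharmonic.weight_mul_le (hb0 : ∀ x y, 0 ≤ b x y)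
    (hbs : ∀ x, Summable (b x)) (hf : IsNonnegSuperharmonic b c f) (x y : X) :
    b x y * f y ≤ (|deg b c x| + 1) * f x :=
  calc b x y * f y ≤ ∑' z, b x z * f z :=
        (hf.inDom.summable_mul_of_nonneg hf.nonneg x).le_tsum y fun z _ =>
          mul_nonneg (hb0 x z) (hf.nonneg z)
    _ ≤ deg b c x * f x := hf.tsum_mul_le_deg_mul hbs x
    _ ≤ (|deg b c x| + 1) * f x :=
        mul_le_mul_of_nonneg_right ((le_abs_self _).trans (le_add_of_nonneg_right zero_le_one))
          (hf.nonneg x)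

theorem exists_harnack_const_of_reflTransGen (hb0 : ∀ x y, 0 ≤ b x y)
    (hbs : ∀ x, Summable (b x)) {x y : X}
    (hxy : Relation.ReflTransGen (fun u v => 0 < b u v) x y) :
    ∃ C : ℝ, 0 < C ∧ ∀ f, IsNonnegSuperharmonic b c f → C * f y ≤ f x := by
  induction hxy with
  | refl => exact ⟨1, one_pos, fun f _ => (one_mul _).le⟩
  | @tail u v _ huv ih =>
    obtain ⟨C, hC, hCf⟩ := ih
    have hdeg : 0 < |deg b c u| + 1 := by positivity
    refine ⟨C * (b u v / (|deg b c u| + 1)), mul_pos hC (div_pos huv hdeg), fun f hf => ?_⟩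
    have hedge : b u v / (|deg b c u| + 1) * f v ≤ f u := by
      rw [div_mul_eq_mul_div, div_le_iff₀ hdeg, mul_comm (f u)]
      exact hf.weight_mul_le hb0 hbs u v
    calc C * (b u v / (|deg b c u| + 1)) * f v
        = C * (b u v / (|deg b c u| + 1) * f v) := mul_assoc _ _ _
      _ ≤ C * f u := mul_le_mul_of_nonneg_left hedge hC.le
      _ ≤ f x := hCf f hf

theorem IsNonnegSuperharmonic.shift {R : Set G} (hH : HInvOn b c R) {g : G} (hg : g ∈ R)
    (hf : IsNonnegSuperharmonic b c f) : IsNonnegSuperharmonic b c (shift g f) where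
  inDom := (hH g hg f hf.inDom).1
  superharmonic x := by
    rw [(hH g hg f hf.inDom).2]
    exact hf.superharmonic _
  nonneg x := hf.nonneg _

end

theorem harnack_inequality_general {X : Type*} {G : Type*} [Group G] [MulAction G X]
    (b : X → X → ℝ) (c : X → ℝ)
    (hb0 : ∀ x y, 0 ≤ b x y) (hbs : ∀ x, Summable (b x))
    (hconn : Connected b) (R : Subgroup G) (hH : HInvOn b c (R : Set G)) :
    ∀ x y : X, ∃ C : ℝ, 0 < C ∧ ∀ f : X → ℝ, InDom b f →
      (∀ z, 0 ≤ schrodinger b c f z) → (∀ z, 0 ≤ f z) → f ≠ 0 →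
      ∀ g ∈ R, C * shift g f y ≤ shift g f x := by
  intro x y
  obtain ⟨C, hC, hCf⟩ := exists_harnack_const_of_reflTransGen (c := c) hb0 hbs (hconn x y)
  exact ⟨C, hC, fun f hf hHf hf0 _ g hg =>
    hCf _ (IsNonnegSuperharmonic.shift hH hg ⟨hf, hHf, hf0⟩)⟩

/-- **Harnack inequality.** -/
theorem harnack_inequality {X : Type*} [Countable X] {G : Type*} [Group G] [MulAction G X]
    (b : X → X → ℝ) (c : X → ℝ)
    (hb0 : ∀ x y, 0 ≤ b x y) (hbd : ∀ x, b x x = 0) (hbs : ∀ x, Summable (b x))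
    (hconn : Connected b) (R : Subgroup G) (hH : HInvOn b c (R : Set G)) :
    ∀ x y : X, ∃ C : ℝ, 0 < C ∧ ∀ f : X → ℝ, InDom b f →
      (∀ z, 0 ≤ schrodinger b c f z) → (∀ z, 0 ≤ f z) → f ≠ 0 →
      ∀ g ∈ R, C * shift g f y ≤ shift g f x :=
  harnack_inequality_general b c hb0 hbs hconn R hH

end GraphPaper
end
end

section
/- Let H be the Schrödinger operator associated to a connected graph (b,c) over X and fix x₀ ∈ X. Then the conic section 𝓢⁺₁ = {f ∈ 𝓢⁺ : f(x₀) = 1} is a compact subset of ℝ^X with respect to the product topology. -/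
open MeasureTheory
open scoped BigOperators

noncomputable section

namespace GraphPaper

variable {X : Type*}

variable {G : Type*} [Group G] [MulAction G X]

/-!
A nonnegative `f` lies in the domain of `H` and is superharmonic exactly when
`∑_{y ∈ F} b(x,y) f(y) ≤ deg(x) f(x)` for every point `x` and every finite set `F`.
These are closed conditions in the product topology, so the cone `𝓢⁺ ∪ {0}` is closed. Taking `F = {y}` gives the Harnack-type bound
`f(y) ≤ deg(x)⁺ / b(x,y) · f(x)` along every edge, and chaining it along paths from `x₀`
confines `𝓢⁺₁` to a product of compact intervals.
-/

section

variable (b : X → X → ℝ) (c : X → ℝ)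

lemma schrodinger_eq_deg_mul_sub (hbs : ∀ x, Summable (b x)) {f : X → ℝ} {x : X}
    (hf : Summable fun y => b x y * f y) :
    schrodinger b c f x = deg b c x * f x - ∑' y, b x y * f y := by
  have hsplit : (∑' y, b x y * (f x - f y)) = (∑' y, b x y) * f x - ∑' y, b x y * f y := by
    simp only [mul_sub]
    rw [Summable.tsum_sub ((hbs x).mul_right _) hf, tsum_mul_right]
  rw [schrodinger, hsplit, deg]
  ring

lemma inDom_and_superharmonic_iff (hb0 : ∀ x y, 0 ≤ b x y) (hbs : ∀ x, Summable (b x))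
    {f : X → ℝ} (hf : ∀ z, 0 ≤ f z) :
    (InDom b f ∧ ∀ x, 0 ≤ schrodinger b c f x) ↔
      ∀ x (F : Finset X), ∑ y ∈ F, b x y * f y ≤ deg b c x * f x := by
  have habs : ∀ x, (fun y => b x y * |f y|) = fun y => b x y * f y := fun x => by
    simp only [abs_of_nonneg (hf _)]
  have hterm : ∀ x y, 0 ≤ b x y * f y := fun x y => mul_nonneg (hb0 x y) (hf y)
  constructor
  · rintro ⟨hdom, hsuper⟩ x F
    have hsum : Summable fun y => b x y * f y := habs x ▸ hdom x
    have htsum := hsuper x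
    rw [schrodinger_eq_deg_mul_sub b c hbs hsum, sub_nonneg] at htsum
    exact (hsum.sum_le_tsum F fun y _ => hterm x y).trans htsum
  · intro hfin
    have hsum : ∀ x, Summable fun y => b x y * f y := fun x =>
      summable_of_sum_le (hterm x) (hfin x)
    refine ⟨fun x => habs x ▸ hsum x, fun x => ?_⟩
    rw [schrodinger_eq_deg_mul_sub b c hbs (hsum x), sub_nonneg]
    exact (hsum x).tsum_le_of_sum_le (hfin x)

lemma isClosed_setOf_nonneg_sum_le :
    IsClosed {f : X → ℝ | (∀ z, 0 ≤ f z) ∧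
      ∀ x (F : Finset X), ∑ y ∈ F, b x y * f y ≤ deg b c x * f x} := by
  simp only [Set.ofPred_and, Set.ofPred_forall]
  refine (isClosed_iInter fun z => isClosed_le continuous_const (continuous_apply z)).inter
    (isClosed_iInter fun x => isClosed_iInter fun F => isClosed_le ?_ ?_) <;> fun_prop

lemma le_mul_of_pos_weight {f : X → ℝ} (hf : ∀ z, 0 ≤ f z)
    (hfin : ∀ x (F : Finset X), ∑ y ∈ F, b x y * f y ≤ deg b c x * f x)
    {x y : X} (hxy : 0 < b x y) :
    f y ≤ max (deg b c x) 0 / b x y * f x := by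
  have hedge : b x y * f y ≤ max (deg b c x) 0 * f x := by
    simpa using (hfin x {y}).trans (mul_le_mul_of_nonneg_right (le_max_left _ 0) (hf x))
  rw [div_mul_eq_mul_div, le_div_iff₀ hxy]
  linarith

lemma exists_le_mul_of_reflTransGen {x z : X}
    (hpath : Relation.ReflTransGen (fun u v => 0 < b u v) x z) :
    ∃ C : ℝ, ∀ f : X → ℝ, (∀ z, 0 ≤ f z) →
      (∀ x (F : Finset X), ∑ y ∈ F, b x y * f y ≤ deg b c x * f x) → f z ≤ C * f x := by
  induction hpath with
  | refl => exact ⟨1, fun f _ _ => (one_mul _).ge⟩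
  | @tail u v _ huv ih =>
    obtain ⟨C, hC⟩ := ih
    refine ⟨max (deg b c u) 0 / b u v * C, fun f hf hfin => ?_⟩
    calc f v ≤ max (deg b c u) 0 / b u v * f u := le_mul_of_pos_weight b c hf hfin huv
      _ ≤ max (deg b c u) 0 / b u v * (C * f x) := by
          gcongr
          exact hC f hf hfin
      _ = max (deg b c u) 0 / b u v * C * f x := by ring

end

theorem conic_section_compact_general {X : Type*}
    (b : X → X → ℝ) (c : X → ℝ)
    (hb0 : ∀ x y, 0 ≤ b x y) (hbs : ∀ x, Summable (b x))
    (hconn : Connected b) (x₀ : X) :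
    IsCompact {f : X → ℝ | InDom b f ∧ (∀ z, 0 ≤ schrodinger b c f z) ∧
      (∀ z, 0 ≤ f z) ∧ f ≠ 0 ∧ f x₀ = 1} := by
  have hS : {f : X → ℝ | InDom b f ∧ (∀ z, 0 ≤ schrodinger b c f z) ∧
      (∀ z, 0 ≤ f z) ∧ f ≠ 0 ∧ f x₀ = 1} =
      {f : X → ℝ | (∀ z, 0 ≤ f z) ∧
        ∀ x (F : Finset X), ∑ y ∈ F, b x y * f y ≤ deg b c x * f x} ∩ {f | f x₀ = 1} := by
    ext f
    simp only [Set.mem_ofPred_eq, Set.mem_inter_iff]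
    constructor
    · rintro ⟨hdom, hsuper, hf, -, hx₀⟩
      exact ⟨⟨hf, (inDom_and_superharmonic_iff b c hb0 hbs hf).1 ⟨hdom, hsuper⟩⟩, hx₀⟩
    · rintro ⟨⟨hf, hfin⟩, hx₀⟩
      obtain ⟨hdom, hsuper⟩ := (inDom_and_superharmonic_iff b c hb0 hbs hf).2 hfin
      exact ⟨hdom, hsuper, hf, fun h => by simp [h] at hx₀, hx₀⟩
  choose C hC using fun z => exists_le_mul_of_reflTransGen b c (hconn x₀ z)
  rw [hS]
  refine (isCompact_univ_pi fun z => isCompact_Icc (a := 0) (b := C z)).of_isClosed_subset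
    ((isClosed_setOf_nonneg_sum_le b c).inter (isClosed_eq (continuous_apply x₀)
      continuous_const)) ?_
  rintro f ⟨⟨hf, hfin⟩, hx₀⟩ z -
  exact ⟨hf z, (hC z f hf hfin).trans_eq (by rw [hx₀, mul_one])⟩

/-- The conic section `𝓢⁺₁` is compact in the product topology. -/
theorem conic_section_compact {X : Type*} [Countable X]
    (b : X → X → ℝ) (c : X → ℝ)
    (hb0 : ∀ x y, 0 ≤ b x y) (hbd : ∀ x, b x x = 0) (hbs : ∀ x, Summable (b x))
    (hconn : Connected b) (x₀ : X) :
    IsCompact {f : X → ℝ | InDom b f ∧ (∀ z, 0 ≤ schrodinger b c f z) ∧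
      (∀ z, 0 ≤ f z) ∧ f ≠ 0 ∧ f x₀ = 1} :=
  conic_section_compact_general b c hb0 hbs hconn x₀

end GraphPaper
end
end

section
/- Let (b,c) be a connected graph over X with a group action G such that H = H_{b,c} is G-invariant, fix x₀ ∈ X, and let R ⊆ G be a subgroup. Let f ∈ 𝓚^R be harmonic and let μ be a Borel probability measure on the set of extreme points ex 𝓚^R such that f(x) = ∫_{ex 𝓚^R} k(x) dμ(k) for all x ∈ X. Then the set {k ∈ ex 𝓚^R : Hk ≠ 0} is a μ-null set. -/
open MeasureTheory
open scoped BigOperators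

noncomputable section

namespace GraphPaper

variable {X : Type*}

variable {G : Type*} [Group G] [MulAction G X]

/-! Every `k ∈ 𝓚` is a nonnegative superharmonic function: `∑_y b(x,y) k(y) ≤ deg(x) k(x)`,
a closed condition that passes from `𝓗⁺` to its closure. Integrating this inequality against `μ`
(monotone convergence on the left) gives `deg(x) f(x)` on both sides, because `f` is harmonic;
so the nonnegative defect vanishes `μ`-almost everywhere, for each of the countably many `x`.
Connectedness bounds `k(z)` uniformly on `𝓚`, which makes the evaluations integrable. -/

section Superharmonic

variable (b : X → X → ℝ) (c : X → ℝ) (x₀ : X)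

/-- Superharmonicity is written through finite partial sums, which keeps the set closed in the
product topology. -/
def normalizedSuperharmonic : Set (X → ℝ) :=
  {h | (∀ z, 0 ≤ h z) ∧ h x₀ = 1 ∧
    ∀ x : X, ∀ F : Finset X, ∑ y ∈ F, b x y * h y ≤ deg b c x * h x}

theorem isClosed_normalizedSuperharmonic : IsClosed (normalizedSuperharmonic b c x₀) := by
  simp only [normalizedSuperharmonic, Set.ofPred_and, Set.ofPred_forall]
  refine (isClosed_iInter fun z => isClosed_le continuous_const (continuous_apply z)).inter
    ((isClosed_eq (continuous_apply x₀) continuous_const).inter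
      (isClosed_iInter fun x => isClosed_iInter fun F => isClosed_le ?_ ?_)) <;> fun_prop

variable {b c x₀}

theorem schrodinger_apply_eq_deg_mul_sub_tsum {f : X → ℝ} {x : X} (hbs : Summable (b x))
    (hf : Summable fun y => b x y * f y) :
    schrodinger b c f x = deg b c x * f x - ∑' y, b x y * f y := by
  simp only [schrodinger, deg, mul_sub]
  rw [Summable.tsum_sub (hbs.mul_right (f x)) hf, tsum_mul_right]
  ring

theorem summable_mul_of_inDom (hb0 : ∀ x y, 0 ≤ b x y) {f : X → ℝ} (hf : InDom b f) (x : X) :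
    Summable fun y => b x y * f y :=
  Summable.of_norm <| (hf x).congr fun y => by
    rw [norm_mul, Real.norm_of_nonneg (hb0 x y), Real.norm_eq_abs]

theorem Kset_subset_normalizedSuperharmonic (hb0 : ∀ x y, 0 ≤ b x y)
    (hbs : ∀ x, Summable (b x)) : Kset b c x₀ ⊆ normalizedSuperharmonic b c x₀ := by
  refine closure_minimal ?_ (isClosed_normalizedSuperharmonic b c x₀)
  rintro h ⟨⟨hdom, hharm, hpos, -⟩, hnorm⟩
  refine ⟨hpos, hnorm, fun x F => ?_⟩
  have hsum := summable_mul_of_inDom hb0 hdom x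
  have hx := schrodinger_apply_eq_deg_mul_sub_tsum (c := c) (hbs x) hsum
  rw [hharm, Pi.zero_apply, eq_comm, sub_eq_zero] at hx
  exact hx ▸ hsum.sum_le_tsum F fun y _ => mul_nonneg (hb0 x y) (hpos y)

variable {h : X → ℝ} (hh : h ∈ normalizedSuperharmonic b c x₀)
include hh

theorem summable_mul_of_mem_normalizedSuperharmonic (hb0 : ∀ x y, 0 ≤ b x y) (x : X) :
    Summable fun y => b x y * h y :=
  summable_of_sum_le (fun y => mul_nonneg (hb0 x y) (hh.1 y)) (hh.2.2 x)

theorem tsum_mul_le_of_mem_normalizedSuperharmonic (hb0 : ∀ x y, 0 ≤ b x y) (x : X) :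
    ∑' y, b x y * h y ≤ deg b c x * h x :=
  (summable_mul_of_mem_normalizedSuperharmonic hh hb0 x).tsum_le_of_sum_le (hh.2.2 x)

theorem inDom_of_mem_normalizedSuperharmonic (hb0 : ∀ x y, 0 ≤ b x y) : InDom b h := fun x =>
  (summable_mul_of_mem_normalizedSuperharmonic hh hb0 x).congr fun y => by
    rw [abs_of_nonneg (hh.1 y)]

theorem deg_mul_nonneg_of_mem_normalizedSuperharmonic (hb0 : ∀ x y, 0 ≤ b x y) (x : X) :
    0 ≤ deg b c x * h x :=
  (tsum_nonneg fun y => mul_nonneg (hb0 x y) (hh.1 y)).trans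
    (tsum_mul_le_of_mem_normalizedSuperharmonic hh hb0 x)

theorem ofReal_tsum_mul_of_mem_normalizedSuperharmonic (hb0 : ∀ x y, 0 ≤ b x y) (x : X) :
    ENNReal.ofReal (∑' y, b x y * h y) = ∑' y, ENNReal.ofReal (b x y * h y) :=
  ENNReal.ofReal_tsum_of_nonneg (fun y => mul_nonneg (hb0 x y) (hh.1 y))
    (summable_mul_of_mem_normalizedSuperharmonic hh hb0 x)

omit hh

theorem exists_forall_mem_normalizedSuperharmonic_le (hconn : Connected b) (z : X) :
    ∃ C : ℝ, ∀ h ∈ normalizedSuperharmonic b c x₀, h z ≤ C := by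
  induction hconn x₀ z with
  | refl => exact ⟨1, fun h hh => hh.2.1.le⟩
  | @tail u v _ hbuv ih =>
    obtain ⟨C, hC⟩ := ih
    refine ⟨|deg b c u| * C / b u v, fun h hh => (le_div_iff₀ hbuv).2 ?_⟩
    have hedge : b u v * h v ≤ deg b c u * h u := by simpa using hh.2.2 u {v}
    calc h v * b u v = b u v * h v := mul_comm _ _
      _ ≤ deg b c u * h u := hedge
      _ ≤ |deg b c u| * h u := mul_le_mul_of_nonneg_right (le_abs_self _) (hh.1 u)
      _ ≤ |deg b c u| * C := mul_le_mul_of_nonneg_left (hC h hh) (abs_nonneg _)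

theorem integrable_eval_of_ae_mem_normalizedSuperharmonic {μ : Measure (X → ℝ)}
    [IsFiniteMeasure μ] (hconn : Connected b)
    (hS : ∀ᵐ k ∂μ, k ∈ normalizedSuperharmonic b c x₀) (z : X) :
    Integrable (fun k : X → ℝ => k z) μ := by
  obtain ⟨C, hC⟩ := exists_forall_mem_normalizedSuperharmonic_le (c := c) (x₀ := x₀) hconn z
  refine Integrable.mono' (integrable_const C) (measurable_pi_apply z).aestronglyMeasurable ?_
  filter_upwards [hS] with k hk
  rw [Real.norm_of_nonneg (hk.1 z)]
  exact hC k hk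

open ENNReal in
theorem ae_schrodinger_apply_eq_zero_of_integral_representation [Countable X]
    {μ : Measure (X → ℝ)} [IsFiniteMeasure μ] (hb0 : ∀ x y, 0 ≤ b x y)
    (hbs : ∀ x, Summable (b x)) (hconn : Connected b)
    (hS : ∀ᵐ k ∂μ, k ∈ normalizedSuperharmonic b c x₀) {f : X → ℝ}
    (hrep : ∀ z, f z = ∫ k, k z ∂μ) {x : X} (hsum : Summable fun y => b x y * f y)
    (hharm : schrodinger b c f x = 0) :
    ∀ᵐ k ∂μ, schrodinger b c k x = 0 := by
  have hlintegral (a : ℝ) (z : X) (ha : 0 ≤ᵐ[μ] fun k => a * k z) :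
      ∫⁻ k, ENNReal.ofReal (a * k z) ∂μ = ENNReal.ofReal (a * f z) := by
    rw [← ofReal_integral_eq_lintegral_ofReal
      ((integrable_eval_of_ae_mem_normalizedSuperharmonic hconn hS z).const_mul a) ha,
      integral_const_mul, hrep]
  have hf0 (y : X) : 0 ≤ b x y * f y :=
    mul_nonneg (hb0 x y) (hrep y ▸ integral_nonneg_of_ae (hS.mono fun k hk => hk.1 y))
  have hle : (fun k => ∑' y, ENNReal.ofReal (b x y * k y))
      ≤ᵐ[μ] fun k => ENNReal.ofReal (deg b c x * k x) := by
    filter_upwards [hS] with k hk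
    rw [← ofReal_tsum_mul_of_mem_normalizedSuperharmonic hk hb0 x]
    exact ofReal_le_ofReal (tsum_mul_le_of_mem_normalizedSuperharmonic hk hb0 x)
  have hdeg_lintegral :
      ∫⁻ k, ENNReal.ofReal (deg b c x * k x) ∂μ = ENNReal.ofReal (deg b c x * f x) :=
    hlintegral _ _ <| hS.mono fun k hk => deg_mul_nonneg_of_mem_normalizedSuperharmonic hk hb0 x
  have hsum_lintegral :
      ∫⁻ k, ∑' y, ENNReal.ofReal (b x y * k y) ∂μ = ENNReal.ofReal (deg b c x * f x) := by
    rw [schrodinger_apply_eq_deg_mul_sub_tsum (hbs x) hsum, sub_eq_zero] at hharm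
    rw [lintegral_tsum fun y => ((measurable_pi_apply y).const_mul _).ennreal_ofReal.aemeasurable,
      tsum_congr fun y => hlintegral _ _ (hS.mono fun k hk => mul_nonneg (hb0 x y) (hk.1 y)),
      ← ofReal_tsum_of_nonneg hf0 hsum, hharm]
  filter_upwards [ae_eq_of_ae_le_of_lintegral_le hle (hsum_lintegral ▸ ofReal_ne_top)
    ((measurable_pi_apply x).const_mul _).ennreal_ofReal.aemeasurable
    (hdeg_lintegral.trans hsum_lintegral.symm).le, hS] with k hk hkS
  rw [← ofReal_tsum_mul_of_mem_normalizedSuperharmonic hkS hb0 x,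
    ofReal_eq_ofReal_iff (tsum_nonneg fun y => mul_nonneg (hb0 x y) (hkS.1 y))
      (deg_mul_nonneg_of_mem_normalizedSuperharmonic hkS hb0 x)] at hk
  rw [schrodinger_apply_eq_deg_mul_sub_tsum (hbs x)
    (summable_mul_of_mem_normalizedSuperharmonic hkS hb0 x), hk, sub_self]

end Superharmonic

theorem representing_measure_concentrated_on_harmonic_general {X : Type*} [Countable X]
    {G : Type*} [Group G] [MulAction G X]
    (b : X → X → ℝ) (c : X → ℝ)
    (hb0 : ∀ x y, 0 ≤ b x y) (hbs : ∀ x, Summable (b x))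
    (hconn : Connected b) (x₀ : X)
    (R : Subgroup G)
    (f : X → ℝ)
    (hdom : InDom b f) (hharm : schrodinger b c f = 0)
    (μ : Measure (X → ℝ)) [IsProbabilityMeasure μ]
    (hconc : μ (Set.extremePoints ℝ (KsetR b c x₀ (R : Set G)))ᶜ = 0)
    (hrep : ∀ x : X, f x = ∫ k, k x ∂μ) :
    μ {k | k ∈ Set.extremePoints ℝ (KsetR b c x₀ (R : Set G)) ∧
        ¬ (InDom b k ∧ schrodinger b c k = 0)} = 0 := by
  have hS : ∀ᵐ k ∂μ, k ∈ normalizedSuperharmonic b c x₀ :=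
    (ae_iff.2 hconc).mono fun k hk =>
      Kset_subset_normalizedSuperharmonic hb0 hbs (extremePoints_subset hk).1
  have hHk : ∀ᵐ k ∂μ, ∀ x, schrodinger b c k x = 0 := ae_all_iff.2 fun x =>
    ae_schrodinger_apply_eq_zero_of_integral_representation hb0 hbs hconn hS hrep
      (summable_mul_of_inDom hb0 hdom x) (congrFun hharm x)
  refine measure_mono_null (fun k hk => hk.2) (ae_iff.1 ?_)
  filter_upwards [hS, hHk] with k hkS hk
  exact ⟨inDom_of_mem_normalizedSuperharmonic hkS hb0, funext hk⟩

/-- A Choquet representing measure of a harmonic element of `𝓚^R`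
is concentrated on the harmonic extreme points. -/
theorem representing_measure_concentrated_on_harmonic {X : Type*} [Countable X]
    {G : Type*} [Group G] [MulAction G X]
    (b : X → X → ℝ) (c : X → ℝ)
    (hb0 : ∀ x y, 0 ≤ b x y) (hbd : ∀ x, b x x = 0) (hbs : ∀ x, Summable (b x))
    (hconn : Connected b) (x₀ : X) (hH : HInvOn b c (Set.univ : Set G))
    (R : Subgroup G)
    (f : X → ℝ) (hf : f ∈ KsetR b c x₀ (R : Set G))
    (hdom : InDom b f) (hharm : schrodinger b c f = 0)
    (μ : Measure (X → ℝ)) [IsProbabilityMeasure μ]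
    (hconc : μ (Set.extremePoints ℝ (KsetR b c x₀ (R : Set G)))ᶜ = 0)
    (hrep : ∀ x : X, f x = ∫ k, k x ∂μ) :
    μ {k | k ∈ Set.extremePoints ℝ (KsetR b c x₀ (R : Set G)) ∧
        ¬ (InDom b k ∧ schrodinger b c k = 0)} = 0 :=
  representing_measure_concentrated_on_harmonic_general b c hb0 hbs hconn x₀ R f hdom hharm μ hconc
    hrep

end GraphPaper
end
end

section
/- Let (b,c) be a connected graph over X with a cocompact group action G such that H = H_{b,c} is G-invariant, fix x₀ ∈ X, and let R ⊆ G be a normal subgroup. If q ∈ Q(R) is a commutator in G, i.e. q = g⁻¹l⁻¹gl for some g, l ∈ G, then T_q f = f for every harmonic f ∈ 𝓚^R. -/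
/-!
Put `p = q⁻¹`. Modulo `R` the element `q` is central, so the `R`-invariance of `f` gives
`f (a p y) = f (p a y)` for all `a`. By Harnack's inequality the translates `y ↦ f (a y) / f (a v)`,
with `v` in the finite set `V` such that `G V = X`, lie in a compact set of functions. Minimising
`φ ↦ φ (p v)` over it yields the best constant `t` with `t f ≤ f ∘ p`, attained at a limit `h` of
translates. Then `h ∘ p - t h` is a nonnegative limit of harmonic functions vanishing at a point,
hence zero by the minimum principle: `h (p y) = t h (y)`. Centrality also gives
`q ^ (n²) ≡ [g ^ n, l ^ n]` modulo `R`, so Harnack's inequality along this word of length `4n`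
gives `h (q ^ (n²) x₀) ≤ Dⁿ h (x₀)`; with `h (x₀) = t ^ (n²) h (q ^ (n²) x₀)` this forces `t ≥ 1`,
that is `f ≤ f ∘ q⁻¹`. The same argument for `q⁻¹ = l⁻¹ g⁻¹ l g` gives the reverse inequality.
-/

open MeasureTheory
open scoped BigOperators

noncomputable section

namespace GraphPaper

variable {X : Type*}

variable {G : Type*} [Group G] [MulAction G X]

theorem inv_pow_mul_inv_pow_mul_pow_mul_pow_of_mem_center {H : Type*} [Group H] {a b : H}
    (h : a⁻¹ * b⁻¹ * a * b ∈ Subgroup.center H) (m n : ℕ) :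
    a⁻¹ ^ m * b⁻¹ ^ n * a ^ m * b ^ n = (a⁻¹ * b⁻¹ * a * b) ^ (m * n) := by
  set q := a⁻¹ * b⁻¹ * a * b with hq
  have hcomm : ∀ z, Commute z q := fun z => Subgroup.mem_center_iff.mp h z
  have hconj : b⁻¹ * a ^ m * b = a ^ m * q ^ m := by
    rw [← (hcomm a).mul_pow, show a * q = b⁻¹ * a * b⁻¹⁻¹ by rw [hq]; group, conj_pow, inv_inv]
  have hconj_pow : ∀ n : ℕ, b⁻¹ ^ n * a ^ m * b ^ n = a ^ m * q ^ (m * n) := by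
    intro n
    induction n with
    | zero => simp
    | succ n ih =>
      calc b⁻¹ ^ (n + 1) * a ^ m * b ^ (n + 1) = b⁻¹ * (b⁻¹ ^ n * a ^ m * b ^ n) * b := by
            rw [pow_succ', pow_succ]; group
        _ = b⁻¹ * a ^ m * b * q ^ (m * n) := by
            rw [ih]; simp only [mul_assoc, ((hcomm b).pow_right _).eq]
        _ = a ^ m * q ^ (m * (n + 1)) := by rw [hconj, mul_assoc, ← pow_add]; ring_nf
  rw [mul_assoc (a⁻¹ ^ m * b⁻¹ ^ n), mul_assoc (a⁻¹ ^ m), ← mul_assoc (b⁻¹ ^ n), hconj_pow,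
    inv_pow, inv_mul_cancel_left]

theorem one_le_of_forall_one_le_pow_mul_self_mul_pow {t D : ℝ} (ht : 0 ≤ t) (hD : 0 ≤ D)
    (h : ∀ n : ℕ, 1 ≤ t ^ (n * n) * D ^ n) : 1 ≤ t := by
  by_contra! ht1
  have hlim : Filter.Tendsto (fun n : ℕ => t ^ n * D) Filter.atTop (nhds 0) := by
    simpa using (tendsto_pow_atTop_nhds_zero_of_lt_one ht ht1).mul_const D
  obtain ⟨n, hn, hn1⟩ :=
    ((hlim.eventually (gt_mem_nhds one_pos)).and (Filter.eventually_ge_atTop 1)).exists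
  have hlt : (t ^ n * D) ^ n < 1 := pow_lt_one₀ (by positivity) hn (by omega)
  rw [mul_pow, ← pow_mul] at hlt
  exact (h n).not_gt hlt

section Harmonic

variable {b : X → X → ℝ} {c : X → ℝ}

/-- For `φ` in the domain, `Hφ = 0` is the identity `∑_y b(x,y) φ(y) = deg(x) φ(x)`. -/
def IsHarmonicSum (b : X → X → ℝ) (c : X → ℝ) (φ : X → ℝ) : Prop :=
  ∀ x, HasSum (fun y => b x y * φ y) (deg b c x * φ x)

/-- The single-term consequence of `Hφ ≥ 0` for `φ ≥ 0`. Unlike superharmonicity it is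
manifestly closed under pointwise limits, and it is all that Harnack's inequality needs. -/
def IsLocallyDominated (b : X → X → ℝ) (c : X → ℝ) (φ : X → ℝ) : Prop :=
  (∀ x, 0 ≤ φ x) ∧ ∀ x y, b x y * φ y ≤ deg b c x * φ x

theorem isHarmonicSum_of_harmonic (hb0 : ∀ x y, 0 ≤ b x y) (hbs : ∀ x, Summable (b x))
    {φ : X → ℝ} (hdom : InDom b φ) (hharm : schrodinger b c φ = 0) : IsHarmonicSum b c φ := by
  intro x
  have hsum : Summable fun y => b x y * φ y :=
    (hdom x).of_norm_bounded fun y => by rw [Real.norm_eq_abs, abs_mul, abs_of_nonneg (hb0 x y)]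
  have hsplit : ∑' y, b x y * (φ x - φ y) = (∑' y, b x y) * φ x - ∑' y, b x y * φ y := by
    simp only [mul_sub]
    rw [((hbs x).mul_right (φ x)).tsum_sub hsum, tsum_mul_right]
  have hx : (∑' y, b x y * (φ x - φ y)) + c x * φ x = 0 := congrFun hharm x
  convert hsum.hasSum using 1
  rw [deg]
  linarith

theorem IsHarmonicSum.sub {φ ψ : X → ℝ} (hφ : IsHarmonicSum b c φ) (hψ : IsHarmonicSum b c ψ) :
    IsHarmonicSum b c (fun y => φ y - ψ y) := fun x => by
  simpa only [mul_sub] using (hφ x).sub (hψ x)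

theorem IsHarmonicSum.const_mul {φ : X → ℝ} (hφ : IsHarmonicSum b c φ) (s : ℝ) :
    IsHarmonicSum b c (fun y => s * φ y) := fun x => by
  simpa only [mul_left_comm] using (hφ x).mul_left s

theorem IsHarmonicSum.isLocallyDominated (hb0 : ∀ x y, 0 ≤ b x y) {φ : X → ℝ}
    (hφ : IsHarmonicSum b c φ) (hφ0 : ∀ x, 0 ≤ φ x) : IsLocallyDominated b c φ :=
  ⟨hφ0, fun x y => le_hasSum (hφ x) y fun z _ => mul_nonneg (hb0 x z) (hφ0 z)⟩

theorem isClosed_setOf_isLocallyDominated :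
    IsClosed {φ : X → ℝ | IsLocallyDominated b c φ} := by
  simp only [IsLocallyDominated, Set.ofPred_and, Set.ofPred_forall]
  exact (isClosed_iInter fun x => isClosed_le continuous_const (continuous_apply x)).inter
    (isClosed_iInter fun x => isClosed_iInter fun y => isClosed_le (by fun_prop) (by fun_prop))

theorem isLocallyDominated_of_mem_closure {S : Set (X → ℝ)}
    (hS : ∀ φ ∈ S, IsLocallyDominated b c φ) {φ : X → ℝ} (hφ : φ ∈ closure S) :
    IsLocallyDominated b c φ :=
  closure_minimal hS isClosed_setOf_isLocallyDominated hφ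

theorem exists_harnack_const (hconn : Connected b) (x y : X) :
    ∃ C, 0 ≤ C ∧ ∀ φ, IsLocallyDominated b c φ → φ y ≤ C * φ x := by
  induction hconn x y with
  | refl => exact ⟨1, zero_le_one, fun φ _ => (one_mul _).ge⟩
  | @tail p z _ hpz ih =>
    obtain ⟨C, hC0, hC⟩ := ih
    set M := max (deg b c p / b p z) 0
    refine ⟨M * C, by positivity, fun φ hφ => ?_⟩
    have hstep : φ z ≤ M * φ p := calc
      φ z ≤ deg b c p / b p z * φ p := by
        rw [div_mul_eq_mul_div, le_div_iff₀ hpz, mul_comm]; exact hφ.2 p z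
      _ ≤ M * φ p := mul_le_mul_of_nonneg_right (le_max_left _ _) (hφ.1 p)
    calc φ z ≤ M * φ p := hstep
      _ ≤ M * (C * φ x) := mul_le_mul_of_nonneg_left (hC φ hφ) (le_max_right _ _)
      _ = M * C * φ x := (mul_assoc _ _ _).symm

theorem IsLocallyDominated.eq_zero {φ : X → ℝ} (hφ : IsLocallyDominated b c φ)
    (hconn : Connected b) {v : X} (hv : φ v = 0) (y : X) : φ y = 0 := by
  obtain ⟨C, -, hC⟩ := exists_harnack_const (c := c) hconn v y
  exact le_antisymm (by simpa [hv] using hC φ hφ) (hφ.1 y)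

theorem IsLocallyDominated.pos {φ : X → ℝ} (hφ : IsLocallyDominated b c φ)
    (hconn : Connected b) {v : X} (hv : 0 < φ v) (x : X) : 0 < φ x := by
  refine (hφ.1 x).lt_of_ne fun hx => ?_
  obtain ⟨C, -, hC⟩ := exists_harnack_const (c := c) hconn x v
  have := hC φ hφ
  rw [← hx, mul_zero] at this
  linarith

theorem isCompact_closure_inter_setOf_apply_eq_one (hconn : Connected b) {S : Set (X → ℝ)}
    (hS : ∀ φ ∈ S, IsLocallyDominated b c φ) (v : X) :
    IsCompact (closure S ∩ {φ | φ v = 1}) := by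
  choose C _ hC using fun y => exists_harnack_const (c := c) hconn v y
  refine (isCompact_univ_pi fun y => isCompact_Icc (a := 0) (b := C y)).of_isClosed_subset
    (isClosed_closure.inter (isClosed_eq (continuous_apply v) continuous_const)) ?_
  rintro φ ⟨hφS, hφv⟩ y -
  have hφ := isLocallyDominated_of_mem_closure hS hφS
  exact ⟨hφ.1 y, by simpa [show φ v = 1 from hφv] using hC y φ hφ⟩

end Harmonic

section Translates

variable {b : X → X → ℝ} {c : X → ℝ} {f : X → ℝ}

theorem isHarmonicSum_comp_smul (hb0 : ∀ x y, 0 ≤ b x y) (hbs : ∀ x, Summable (b x))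
    (hH : HInvOn b c (Set.univ : Set G)) (hdom : InDom b f) (hharm : schrodinger b c f = 0)
    (a : G) : IsHarmonicSum b c (fun y => f (a • y)) := by
  obtain ⟨hdom', hharm'⟩ := hH a⁻¹ (Set.mem_univ _) f hdom
  have he : shift a⁻¹ f = fun y => f (a • y) := funext fun y => by simp [shift]
  rw [he] at hdom' hharm'
  refine isHarmonicSum_of_harmonic hb0 hbs hdom' ?_
  rw [hharm', hharm]
  rfl

variable (G) in
def scaledTranslates (f : X → ℝ) : Set (X → ℝ) :=
  {φ | ∃ s : ℝ, 0 ≤ s ∧ ∃ a : G, φ = fun y => s * f (a • y)}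

theorem comp_smul_mem_scaledTranslates {φ : X → ℝ} (hφ : φ ∈ scaledTranslates G f) (a : G) :
    (fun y => φ (a • y)) ∈ scaledTranslates G f := by
  obtain ⟨s, hs, u, rfl⟩ := hφ
  exact ⟨s, hs, u * a, by simp only [mul_smul]⟩

theorem isLocallyDominated_of_mem_scaledTranslates (hb0 : ∀ x y, 0 ≤ b x y)
    (hf : ∀ a : G, IsHarmonicSum b c fun y => f (a • y)) (hf0 : ∀ x, 0 ≤ f x) {φ : X → ℝ}
    (hφ : φ ∈ scaledTranslates G f) : IsLocallyDominated b c φ := by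
  obtain ⟨s, hs, a, rfl⟩ := hφ
  exact ((hf a).const_mul s).isLocallyDominated hb0 fun y => mul_nonneg hs (hf0 _)

end Translates

section WordBound

variable {b : X → X → ℝ} {c : X → ℝ} {S : Set (X → ℝ)}

theorem exists_apply_mul_pow_smul_le (hconn : Connected b)
    (hS : ∀ φ ∈ S, ∀ a : G, (fun y => φ (a • y)) ∈ S)
    (hSd : ∀ φ ∈ S, IsLocallyDominated b c φ) (x₀ : X) (w : G) :
    ∃ C, 0 ≤ C ∧ ∀ φ ∈ S, ∀ (a : G) (n : ℕ), φ ((a * w ^ n) • x₀) ≤ C ^ n * φ (a • x₀) := by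
  obtain ⟨C, hC0, hC⟩ := exists_harnack_const (c := c) hconn x₀ (w • x₀)
  refine ⟨C, hC0, fun φ hφ a n => ?_⟩
  induction n with
  | zero => simp
  | succ n ih =>
    calc φ ((a * w ^ (n + 1)) • x₀) = (fun y => φ ((a * w ^ n) • y)) (w • x₀) := by
          rw [pow_succ, ← mul_assoc, mul_smul]
      _ ≤ C * φ ((a * w ^ n) • x₀) := hC _ (hSd _ (hS φ hφ _))
      _ ≤ C * (C ^ n * φ (a • x₀)) := mul_le_mul_of_nonneg_left ih hC0
      _ = C ^ (n + 1) * φ (a • x₀) := by ring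

theorem exists_commutator_pow_bound (hconn : Connected b)
    (hS : ∀ φ ∈ S, ∀ a : G, (fun y => φ (a • y)) ∈ S)
    (hSd : ∀ φ ∈ S, IsLocallyDominated b c φ) (x₀ : X) (g l : G) :
    ∃ D, 0 ≤ D ∧ ∀ φ ∈ S, ∀ n : ℕ,
      φ ((g⁻¹ ^ n * l⁻¹ ^ n * g ^ n * l ^ n) • x₀) ≤ D ^ n * φ x₀ := by
  obtain ⟨C₁, h₁0, h₁⟩ := exists_apply_mul_pow_smul_le hconn hS hSd x₀ g⁻¹
  obtain ⟨C₂, h₂0, h₂⟩ := exists_apply_mul_pow_smul_le hconn hS hSd x₀ l⁻¹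
  obtain ⟨C₃, h₃0, h₃⟩ := exists_apply_mul_pow_smul_le hconn hS hSd x₀ g
  obtain ⟨C₄, h₄0, h₄⟩ := exists_apply_mul_pow_smul_le hconn hS hSd x₀ l
  refine ⟨C₄ * C₃ * C₂ * C₁, by positivity, fun φ hφ n => ?_⟩
  calc φ ((g⁻¹ ^ n * l⁻¹ ^ n * g ^ n * l ^ n) • x₀)
      ≤ C₄ ^ n * φ ((g⁻¹ ^ n * l⁻¹ ^ n * g ^ n) • x₀) := h₄ φ hφ _ n
    _ ≤ C₄ ^ n * (C₃ ^ n * φ ((g⁻¹ ^ n * l⁻¹ ^ n) • x₀)) := by gcongr; exact h₃ φ hφ _ n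
    _ ≤ C₄ ^ n * (C₃ ^ n * (C₂ ^ n * φ (g⁻¹ ^ n • x₀))) := by gcongr; exact h₂ φ hφ _ n
    _ ≤ C₄ ^ n * (C₃ ^ n * (C₂ ^ n * (C₁ ^ n * φ x₀))) := by
        gcongr; simpa using h₁ φ hφ 1 n
    _ = (C₄ * C₃ * C₂ * C₁) ^ n * φ x₀ := by ring

end WordBound

section Eigenfunction

variable {b : X → X → ℝ} {c : X → ℝ} {f : X → ℝ}

theorem exists_ratio_bound_attained [Nonempty X] (hconn : Connected b)
    (hcocpt : CocompactAction G X)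
    (hfd : ∀ φ ∈ scaledTranslates G f, IsLocallyDominated b c φ) (hfpos : ∀ x, 0 < f x) {p : G}
    (hp : ∀ (a : G) (y : X), f ((a * p) • y) = f ((p * a) • y)) :
    ∃ t : ℝ, (∀ x, t * f x ≤ f (p • x)) ∧
      ∃ v, ∃ h ∈ closure (scaledTranslates G f), h v = 1 ∧ h (p • v) = t := by
  have hmem : ∀ (a : G) (v : X), (fun y => (f (a • v))⁻¹ * f (a • y)) ∈
      closure (scaledTranslates G f) ∩ {φ | φ v = 1} := fun a v =>
    ⟨subset_closure ⟨_, (inv_pos.mpr (hfpos _)).le, a, rfl⟩, inv_mul_cancel₀ (hfpos _).ne'⟩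
  choose h hh hmin using fun v : X =>
    (isCompact_closure_inter_setOf_apply_eq_one hconn hfd v).exists_isMinOn ⟨_, hmem 1 v⟩
      (continuous_apply (p • v)).continuousOn
  obtain ⟨V, hV⟩ := hcocpt
  obtain ⟨x₀⟩ := ‹Nonempty X›
  obtain ⟨v, hvV, hvmin⟩ := V.exists_min_image (fun v => h v (p • v))
    (by obtain ⟨_, v, hv, -⟩ := hV x₀; exact ⟨v, hv⟩)
  refine ⟨h v (p • v), fun x => ?_, v, h v, (hh v).1, (hh v).2, rfl⟩
  obtain ⟨a, u, hu, rfl⟩ := hV x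
  calc h v (p • v) * f (a • u) ≤ h u (p • u) * f (a • u) :=
        mul_le_mul_of_nonneg_right (hvmin u hu) (hfpos _).le
    _ ≤ (f (a • u))⁻¹ * f (a • p • u) * f (a • u) :=
        mul_le_mul_of_nonneg_right (isMinOn_iff.mp (hmin u) _ (hmem a u)) (hfpos _).le
    _ = f (p • a • u) := by
        rw [smul_smul, hp, ← smul_smul]; field_simp [(hfpos (a • u)).ne']

theorem isLocallyDominated_sub_of_mem_closure_scaledTranslates (hb0 : ∀ x y, 0 ≤ b x y)
    (hf : ∀ a : G, IsHarmonicSum b c fun y => f (a • y)) {p : G}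
    (hp : ∀ (a : G) (y : X), f ((a * p) • y) = f ((p * a) • y)) {t : ℝ}
    (ht : ∀ x, t * f x ≤ f (p • x)) {φ : X → ℝ} (hφ : φ ∈ closure (scaledTranslates G f)) :
    IsLocallyDominated b c (fun y => φ (p • y) - t * φ y) := by
  refine closure_minimal (fun φ hφ => ?_)
    (isClosed_setOf_isLocallyDominated.preimage
      (f := fun φ : X → ℝ => fun y => φ (p • y) - t * φ y) (by fun_prop)) hφ
  obtain ⟨s, hs, a, rfl⟩ := hφ
  have heq : (fun y => s * f (a • p • y) - t * (s * f (a • y)))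
      = fun y => s * (f ((a * p) • y) - t * f (a • y)) := by
    ext y; rw [smul_smul]; ring
  show IsLocallyDominated b c (fun y => s * f (a • p • y) - t * (s * f (a • y)))
  rw [heq]
  refine (((hf (a * p)).sub ((hf a).const_mul t)).const_mul s).isLocallyDominated hb0
    fun y => mul_nonneg hs ?_
  rw [hp, mul_smul]
  exact sub_nonneg.mpr (ht _)

theorem exists_eigenfunction [Nonempty X] (hb0 : ∀ x y, 0 ≤ b x y) (hconn : Connected b)
    (hcocpt : CocompactAction G X) (hf : ∀ a : G, IsHarmonicSum b c fun y => f (a • y))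
    (hfpos : ∀ x, 0 < f x) {p : G} (hp : ∀ (a : G) (y : X), f ((a * p) • y) = f ((p * a) • y)) :
    ∃ t : ℝ, (∀ x, t * f x ≤ f (p • x)) ∧
      ∃ h ∈ closure (scaledTranslates G f), (∀ y, 0 < h y) ∧ ∀ y, h (p • y) = t * h y := by
  have hfd : ∀ φ ∈ scaledTranslates G f, IsLocallyDominated b c φ := fun φ hφ =>
    isLocallyDominated_of_mem_scaledTranslates hb0 hf (fun x => (hfpos x).le) hφ
  obtain ⟨t, ht, v, h, hh, hv, hpv⟩ := exists_ratio_bound_attained hconn hcocpt hfd hfpos hp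
  have hw := isLocallyDominated_sub_of_mem_closure_scaledTranslates hb0 hf hp ht hh
  have hw0 := hw.eq_zero hconn (v := v) (by simp [hv, hpv])
  refine ⟨t, ht, h, hh, ?_, fun y => sub_eq_zero.mp (hw0 y)⟩
  exact (isLocallyDominated_of_mem_closure hfd hh).pos hconn (by rw [hv]; exact one_pos)

end Eigenfunction

section Quotient

variable {b : X → X → ℝ} {c : X → ℝ} {f : X → ℝ} {R : Subgroup G} [R.Normal]

theorem apply_smul_eq_of_mk_eq (hfR : ∀ ρ ∈ R, shift ρ f = f) {u v : G}
    (huv : (u : G ⧸ R) = v) (y : X) : f (u • y) = f (v • y) := by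
  have hρ : u * (u⁻¹ * v) * u⁻¹ ∈ R := Subgroup.Normal.conj_mem ‹_› _ (QuotientGroup.eq.mp huv) u
  have h := congrFun (hfR _ (inv_mem hρ)) (u • y)
  rw [shift, inv_inv, smul_smul, show u * (u⁻¹ * v) * u⁻¹ * u = v by group] at h
  exact h.symm

theorem mk_mul_eq_mk_mul_of_mem_Qsub {p : G} (hp : p ∈ Qsub R) (a : G) :
    ((a * p : G) : G ⧸ R) = ((p * a : G) : G ⧸ R) :=
  Subgroup.mem_center_iff.mp hp (a : G ⧸ R)

theorem exists_apply_pow_mul_self_smul_le (hb0 : ∀ x y, 0 ≤ b x y) (hconn : Connected b)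
    (hf : ∀ a : G, IsHarmonicSum b c fun y => f (a • y)) (hf0 : ∀ x, 0 ≤ f x)
    (hfR : ∀ ρ ∈ R, shift ρ f = f) {q g l : G} (hq : q ∈ Qsub R)
    (hcomm : q = g⁻¹ * l⁻¹ * g * l) (x₀ : X) :
    ∃ D, 0 ≤ D ∧ ∀ n : ℕ, ∀ φ ∈ closure (scaledTranslates G f),
      φ (q ^ (n * n) • x₀) ≤ D ^ n * φ x₀ := by
  obtain ⟨D, hD0, hD⟩ := exists_commutator_pow_bound (c := c) hconn
    (fun φ hφ a => comp_smul_mem_scaledTranslates hφ a)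
    (fun φ hφ => isLocallyDominated_of_mem_scaledTranslates hb0 hf hf0 hφ) x₀ g l
  refine ⟨D, hD0, fun n => closure_minimal ?_
    (isClosed_le (continuous_apply _) ((continuous_apply _).const_mul _))⟩
  rintro _ ⟨s, hs, a, rfl⟩
  have hcen : (g : G ⧸ R)⁻¹ * (l : G ⧸ R)⁻¹ * g * l ∈ Subgroup.center (G ⧸ R) := by
    subst hcomm; exact hq
  have hword : ((a * q ^ (n * n) : G) : G ⧸ R)
      = ((a * (g⁻¹ ^ n * l⁻¹ ^ n * g ^ n * l ^ n) : G) : G ⧸ R) := by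
    simp only [QuotientGroup.mk_pow, QuotientGroup.mk_mul, QuotientGroup.mk_inv,
      inv_pow_mul_inv_pow_mul_pow_mul_pow_of_mem_center hcen, hcomm]
  have := hD _ ⟨s, hs, a, rfl⟩ n
  show s * f (a • q ^ (n * n) • x₀) ≤ D ^ n * (s * f (a • x₀))
  simp only [smul_smul] at this ⊢
  rwa [apply_smul_eq_of_mk_eq hfR hword]

theorem le_apply_inv_smul_of_mem_Qsub [Nonempty X] (hb0 : ∀ x y, 0 ≤ b x y)
    (hconn : Connected b) (hcocpt : CocompactAction G X)
    (hf : ∀ a : G, IsHarmonicSum b c fun y => f (a • y)) (hfpos : ∀ x, 0 < f x)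
    (hfR : ∀ ρ ∈ R, shift ρ f = f) {q g l : G} (hq : q ∈ Qsub R)
    (hcomm : q = g⁻¹ * l⁻¹ * g * l) (x : X) : f x ≤ f (q⁻¹ • x) := by
  obtain ⟨x₀⟩ := ‹Nonempty X›
  obtain ⟨t, ht, h, hh, hpos, heig⟩ := exists_eigenfunction hb0 hconn hcocpt hf hfpos
    fun a y => apply_smul_eq_of_mk_eq hfR (mk_mul_eq_mk_mul_of_mem_Qsub (inv_mem hq) a) y
  obtain ⟨D, hD0, hD⟩ :=
    exists_apply_pow_mul_self_smul_le hb0 hconn hf (fun x => (hfpos x).le) hfR hq hcomm x₀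
  have ht0 : 0 ≤ t := (pos_of_mul_pos_left (heig x₀ ▸ hpos _) (hpos x₀).le).le
  have hiter : ∀ m : ℕ, h x₀ = t ^ m * h (q ^ m • x₀) := by
    intro m
    induction m with
    | zero => simp
    | succ m ih =>
      rw [ih, pow_succ t, mul_assoc, ← heig, smul_smul, pow_succ' q, inv_mul_cancel_left]
  have h1 : 1 ≤ t := one_le_of_forall_one_le_pow_mul_self_mul_pow ht0 hD0 fun n => by
    refine (le_mul_iff_one_le_left (hpos x₀)).mp ?_
    calc h x₀ = t ^ (n * n) * h (q ^ (n * n) • x₀) := hiter (n * n)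
      _ ≤ t ^ (n * n) * (D ^ n * h x₀) := by gcongr; exact hD n h hh
      _ = t ^ (n * n) * D ^ n * h x₀ := by ring
  calc f x ≤ t * f x := le_mul_of_one_le_left (hfpos x).le h1
    _ ≤ f (q⁻¹ • x) := ht x

end Quotient

theorem commutator_in_Qsub_invariant_general {X : Type*} {G : Type*} [Group G]
    [MulAction G X] (b : X → X → ℝ) (c : X → ℝ)
    (hb0 : ∀ x y, 0 ≤ b x y) (hbs : ∀ x, Summable (b x))
    (hconn : Connected b) (hcocpt : CocompactAction G X)
    (hH : HInvOn b c (Set.univ : Set G)) (x₀ : X)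
    (R : Subgroup G) [R.Normal]
    (q : G) (hq : q ∈ Qsub R) (g l : G) (hcomm : q = g⁻¹ * l⁻¹ * g * l)
    (f : X → ℝ) (hf : f ∈ KsetR b c x₀ (R : Set G))
    (hdom : InDom b f) (hharm : schrodinger b c f = 0) :
    shift q f = f := by
  have hf0 : ∀ x, 0 ≤ f x := fun x => closure_minimal (fun φ hφ => hφ.1.2.2.1 x)
    (isClosed_le continuous_const (continuous_apply x)) hf.1
  have hf1 : f x₀ = 1 := closure_minimal (fun φ hφ => hφ.2)
    (isClosed_eq (continuous_apply x₀) continuous_const) hf.1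
  have hfpos : ∀ x, 0 < f x := ((isHarmonicSum_of_harmonic hb0 hbs hdom hharm).isLocallyDominated
    hb0 hf0).pos hconn (v := x₀) (by rw [hf1]; exact one_pos)
  have hfH := isHarmonicSum_comp_smul hb0 hbs hH hdom hharm
  have : Nonempty X := ⟨x₀⟩
  have hle := le_apply_inv_smul_of_mem_Qsub hb0 hconn hcocpt hfH hfpos hf.2 hq hcomm
  have hge := le_apply_inv_smul_of_mem_Qsub hb0 hconn hcocpt hfH hfpos hf.2 (inv_mem hq)
    (show q⁻¹ = l⁻¹ * g⁻¹ * l * g by rw [hcomm]; group)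
  funext x
  exact le_antisymm (by simpa using hge (q⁻¹ • x) : f (q⁻¹ • x) ≤ f x) (hle x)

/-- If `q ∈ Q(R)` is a commutator, then every harmonic `f ∈ 𝓚^R`
is invariant under the shift by `q`. -/
theorem commutator_in_Qsub_invariant {X : Type*} [Countable X] {G : Type*} [Group G]
    [MulAction G X] (b : X → X → ℝ) (c : X → ℝ)
    (hb0 : ∀ x y, 0 ≤ b x y) (hbd : ∀ x, b x x = 0) (hbs : ∀ x, Summable (b x))
    (hconn : Connected b) (hcocpt : CocompactAction G X)
    (hH : HInvOn b c (Set.univ : Set G)) (x₀ : X)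
    (R : Subgroup G) [R.Normal]
    (q : G) (hq : q ∈ Qsub R) (g l : G) (hcomm : q = g⁻¹ * l⁻¹ * g * l)
    (f : X → ℝ) (hf : f ∈ KsetR b c x₀ (R : Set G))
    (hdom : InDom b f) (hharm : schrodinger b c f = 0) :
    shift q f = f :=
  commutator_in_Qsub_invariant_general b c hb0 hbs hconn hcocpt hH x₀ R q hq g l hcomm f hf hdom
    hharm

end GraphPaper
end
end

section
/- (Margulis' theorem for group actions, part (a)) Let (b,c) be a connected graph over X with a nilpotent group G acting cocompactly on X such that H_{b,c} is G-invariant, and fix x₀ ∈ X. Then every element of 𝓚 is [G,G]-invariant, where [G,G] is the commutator subgroup of G. -/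
open MeasureTheory
open scoped BigOperators

noncomputable section

namespace GraphPaper

variable {X : Type*}

variable {G : Type*} [Group G] [MulAction G X]

/-!
Harnack's inequality along paths makes `𝓚` a compact convex set of strictly positive functions,
and the normalized translates `x ↦ u (a • x) / u (a • x₀)` of its elements stay in `𝓚`.
Descend the lower central series: suppose `𝓚` is fixed by `N = γ_{m+2}` and let `z = ⁅g, w⁆`
with `g ∈ γ_m`, so that `z` is central modulo `N`. Cocompactness then gives a uniform bound
`T_z u ≤ D u` on `𝓚`, so for an extreme point `u` of `𝓚` the function `u - T_z u / (2D)` is a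
multiple of an element of `𝓚`, and extremality forces `T_z u = λ u`. Since
`g^n w^n ≡ z^{n²} w^n g^n` modulo `N` while `u (a^n • x₀)` grows at most exponentially in `n`,
we get `λ^{n²} ≤ C^n`, hence `λ ≤ 1`; the same argument for `z⁻¹` gives `λ = 1`.
By Krein–Milman, `z` then fixes all of `𝓚`.
-/

open scoped commutatorElement

lemma pow_mul_pow_eq_commutatorElement_pow_mul {H : Type*} [Group H] {a b : H}
    (hz : ⁅a, b⁆ ∈ Subgroup.center H) (m k : ℕ) :
    a ^ m * b ^ k = ⁅a, b⁆ ^ (m * k) * (b ^ k * a ^ m) := by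
  have hc : ∀ x, Commute ⁅a, b⁆ x := fun x => (Subgroup.mem_center_iff.1 hz x).symm
  have hconj : a * b ^ k = ⁅a, b⁆ ^ k * b ^ k * a := by
    have h1 : a * b * a⁻¹ = ⁅a, b⁆ * b := by rw [commutatorElement_def, inv_mul_cancel_right]
    rw [← (hc b).mul_pow, ← h1, conj_pow, inv_mul_cancel_right]
  induction m with
  | zero => simp
  | succ m ih =>
    calc a ^ (m + 1) * b ^ k = a * (a ^ m * b ^ k) := by rw [pow_succ', mul_assoc]
      _ = ⁅a, b⁆ ^ (m * k) * (a * b ^ k) * a ^ m := by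
        rw [ih, ← mul_assoc, ← mul_assoc, ← ((hc a).pow_left _).eq]
        simp only [mul_assoc]
      _ = ⁅a, b⁆ ^ ((m + 1) * k) * (b ^ k * a ^ (m + 1)) := by
        rw [hconj, add_mul, one_mul, pow_add, pow_succ']
        simp only [mul_assoc]

lemma mem_Qsub_iff {N : Subgroup G} [N.Normal] {z : G} : z ∈ Qsub N ↔ ∀ h, ⁅z, h⁆ ∈ N := by
  rw [Qsub, ← Subgroup.upperCentralSeriesStep_eq_comap_center]
  rfl

lemma le_one_of_forall_pow_mul_self_le {γ C : ℝ} (h : ∀ n : ℕ, γ ^ (n * n) ≤ C ^ n) :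
    γ ≤ 1 := by
  by_contra! hγ
  have hγC : γ ≤ C := by simpa using h 1
  obtain ⟨n, hn⟩ := pow_unbounded_of_one_lt C hγ
  have hn0 : n ≠ 0 := by
    rintro rfl
    rw [pow_zero] at hn
    linarith
  exact (h n).not_gt (by rw [pow_mul]; exact pow_lt_pow_left₀ hn (by linarith) hn0)

theorem subset_of_extremePoints_subset {E : Type*} [AddCommGroup E] [Module ℝ E]
    [TopologicalSpace E] [T2Space E] [IsTopologicalAddGroup E] [ContinuousSMul ℝ E]
    [LocallyConvexSpace ℝ E] {s t : Set E} (hs : IsCompact s) (hsc : Convex ℝ s)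
    (ht : IsClosed t) (htc : Convex ℝ t) (h : s.extremePoints ℝ ⊆ t) : s ⊆ t := by
  rw [← closure_convexHull_extremePoints hs hsc]
  exact closure_minimal (convexHull_min h htc) ht

section Shift

variable {b : X → X → ℝ} {c : X → ℝ} {s : Set (X → ℝ)} {f : X → ℝ}

@[simp]
lemma shift_apply (g : G) (f : X → ℝ) (x : X) : shift g f x = f (g⁻¹ • x) := rfl

lemma shift_one (f : X → ℝ) : shift (1 : G) f = f := by
  funext x
  simp

lemma shift_mul (g h : G) (f : X → ℝ) : shift (g * h) f = shift g (shift h f) := by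
  funext x
  simp [mul_smul]

lemma shift_smul (g : G) (r : ℝ) (f : X → ℝ) : shift g (r • f) = r • shift g f := rfl

lemma continuous_shift (g : G) : Continuous (shift (X := X) g) :=
  continuous_pi fun _ => continuous_apply _

lemma shift_pow_eq_pow_smul {g : G} {γ : ℝ} (h : shift g f = γ • f) (n : ℕ) :
    shift (g ^ n) f = γ ^ n • f := by
  induction n with
  | zero => simp [shift_one]
  | succ n ih => rw [pow_succ', shift_mul, ih, shift_smul, h, smul_smul, pow_succ]

lemma shift_inv_eq_inv_smul {g : G} {γ : ℝ} (hγ : γ ≠ 0) (h : shift g f = γ • f) :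
    shift g⁻¹ f = γ⁻¹ • f := by
  have : f = γ • shift g⁻¹ f := by
    rw [← shift_smul, ← h, ← shift_mul, inv_mul_cancel, shift_one]
  rw [eq_inv_smul_iff₀ hγ, ← this]

lemma shift_mem_Hplus (hH : HInvOn b c (Set.univ : Set G)) (hf : f ∈ Hplus b c) (g : G) :
    shift g f ∈ Hplus b c := by
  obtain ⟨hdom, hsch⟩ := hH g trivial f hf.1
  refine ⟨hdom, by rw [hsch, hf.2.1]; rfl, fun x => hf.2.2.1 _, fun h0 => hf.2.2.2 ?_⟩
  funext x
  simpa using congrFun h0 (g • x)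

variable (G) in
def shiftFixingSubgroup (s : Set (X → ℝ)) : Subgroup G where
  carrier := {g | ∀ f ∈ s, shift g f = f}
  one_mem' f _ := shift_one f
  mul_mem' {g h} hg hh f hf := by rw [shift_mul, hh f hf, hg f hf]
  inv_mem' {g} hg f hf := by
    conv_lhs => rw [← hg f hf]
    rw [← shift_mul, inv_mul_cancel, shift_one]

lemma mem_shiftFixingSubgroup {g : G} : g ∈ shiftFixingSubgroup G s ↔ ∀ f ∈ s, shift g f = f :=
  Iff.rfl

lemma apply_smul_of_mem_shiftFixingSubgroup {g : G} (hg : g ∈ shiftFixingSubgroup G s)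
    (hf : f ∈ s) (x : X) : f (g • x) = f x := by
  simpa using congrFun (mem_shiftFixingSubgroup.1 (inv_mem hg) f hf) x

lemma apply_smul_eq_of_mk_eq_s8 {N : Subgroup G} [N.Normal] (hN : N ≤ shiftFixingSubgroup G s)
    (hf : f ∈ s) {a a' : G} (h : (a : G ⧸ N) = a') (x : X) : f (a • x) = f (a' • x) := by
  have hmem : a' / a ∈ N := QuotientGroup.eq_iff_div_mem.1 h.symm
  rw [← apply_smul_of_mem_shiftFixingSubgroup (hN hmem) hf (a • x), smul_smul, div_mul_cancel]

end Shift

section Harmonic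

variable {b : X → X → ℝ} {c : X → ℝ} {f f₁ f₂ : X → ℝ}

lemma InDom.summable_mul (hb0 : ∀ x y, 0 ≤ b x y) (hf : InDom b f) (x : X) :
    Summable fun y => b x y * f y :=
  .of_abs <| (hf x).congr fun y => by rw [abs_mul, abs_of_nonneg (hb0 x y)]

lemma InDom.summable_mul_sub (hb0 : ∀ x y, 0 ≤ b x y) (hbs : ∀ x, Summable (b x))
    (hf : InDom b f) (x : X) : Summable fun y => b x y * (f x - f y) :=
  (((hbs x).mul_left (f x)).sub (hf.summable_mul hb0 x)).congr fun y => by ring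

lemma InDom.smul_add_smul (hb0 : ∀ x y, 0 ≤ b x y) (hf₁ : InDom b f₁) (hf₂ : InDom b f₂)
    (s t : ℝ) : InDom b (s • f₁ + t • f₂) := by
  intro x
  refine .of_nonneg_of_le (fun y => mul_nonneg (hb0 x y) (abs_nonneg _)) (fun y => ?_)
    (((hf₁ x).mul_left |s|).add ((hf₂ x).mul_left |t|))
  calc b x y * |s * f₁ y + t * f₂ y| ≤ b x y * (|s| * |f₁ y| + |t| * |f₂ y|) :=
        mul_le_mul_of_nonneg_left ((abs_add_le _ _).trans_eq (by rw [abs_mul, abs_mul]))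
          (hb0 x y)
    _ = |s| * (b x y * |f₁ y|) + |t| * (b x y * |f₂ y|) := by ring

lemma schrodinger_smul_add_smul (hb0 : ∀ x y, 0 ≤ b x y) (hbs : ∀ x, Summable (b x))
    (hf₁ : InDom b f₁) (hf₂ : InDom b f₂) (s t : ℝ) :
    schrodinger b c (s • f₁ + t • f₂) = s • schrodinger b c f₁ + t • schrodinger b c f₂ := by
  funext x
  have hsum : ∑' y, b x y * ((s * f₁ x + t * f₂ x) - (s * f₁ y + t * f₂ y))
      = s * ∑' y, b x y * (f₁ x - f₁ y) + t * ∑' y, b x y * (f₂ x - f₂ y) := by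
    rw [← tsum_mul_left, ← tsum_mul_left, ← Summable.tsum_add
      ((hf₁.summable_mul_sub hb0 hbs x).mul_left s) ((hf₂.summable_mul_sub hb0 hbs x).mul_left t)]
    exact tsum_congr fun y => by ring
  simp only [schrodinger, Pi.add_apply, Pi.smul_apply, smul_eq_mul, hsum]
  ring

lemma smul_add_smul_mem_Hplus (hb0 : ∀ x y, 0 ≤ b x y) (hbs : ∀ x, Summable (b x))
    (hf₁ : f₁ ∈ Hplus b c) (hf₂ : f₂ ∈ Hplus b c) {s t : ℝ} (hnonneg : 0 ≤ s • f₁ + t • f₂)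
    (hne : s • f₁ + t • f₂ ≠ 0) : s • f₁ + t • f₂ ∈ Hplus b c := by
  refine ⟨hf₁.1.smul_add_smul hb0 hf₂.1 s t, ?_, hnonneg, hne⟩
  rw [schrodinger_smul_add_smul hb0 hbs hf₁.1 hf₂.1, hf₁.2.1, hf₂.2.1, smul_zero, smul_zero,
    add_zero]

lemma smul_mem_Hplus (hb0 : ∀ x y, 0 ≤ b x y) (hbs : ∀ x, Summable (b x))
    (hf : f ∈ Hplus b c) {r : ℝ} (hr : 0 < r) : r • f ∈ Hplus b c := by
  have h := smul_add_smul_mem_Hplus hb0 hbs hf hf (s := r) (t := 0)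
  simp only [zero_smul, add_zero] at h
  exact h (smul_nonneg hr.le hf.2.2.1) (smul_ne_zero hr.ne' hf.2.2.2)

lemma tsum_mul_eq_deg_mul (hb0 : ∀ x y, 0 ≤ b x y) (hbs : ∀ x, Summable (b x))
    (hf : f ∈ Hplus b c) (x : X) : ∑' y, b x y * f y = deg b c x * f x := by
  have hH : (∑' y, b x y * (f x - f y)) + c x * f x = 0 := congrFun hf.2.1 x
  rw [tsum_congr fun y => mul_sub (b x y) (f x) (f y), Summable.tsum_sub
    ((hbs x).mul_right (f x)) (hf.1.summable_mul hb0 x), tsum_mul_right] at hH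
  rw [deg]
  linarith

lemma apply_le_mul_apply_of_weight_pos (hb0 : ∀ x y, 0 ≤ b x y) (hbs : ∀ x, Summable (b x))
    (hf : f ∈ Hplus b c) {x y : X} (hxy : 0 < b x y) :
    f y ≤ max (deg b c x / b x y) 0 * f x := by
  have hterm : b x y * f y ≤ deg b c x * f x := by
    rw [← tsum_mul_eq_deg_mul hb0 hbs hf x]
    exact (hf.1.summable_mul hb0 x).le_tsum y fun z _ => mul_nonneg (hb0 x z) (hf.2.2.1 z)
  calc f y ≤ deg b c x / b x y * f x := by rw [div_mul_eq_mul_div, le_div_iff₀ hxy]; linarith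
    _ ≤ _ := mul_le_mul_of_nonneg_right (le_max_left _ _) (hf.2.2.1 x)

theorem exists_forall_Hplus_le_mul (hb0 : ∀ x y, 0 ≤ b x y) (hbs : ∀ x, Summable (b x))
    (hconn : Connected b) (x y : X) : ∃ C, 0 ≤ C ∧ ∀ f ∈ Hplus b c, f y ≤ C * f x := by
  induction hconn x y with
  | refl => exact ⟨1, zero_le_one, fun f _ => (one_mul _).ge⟩
  | @tail u v _ huv ih =>
    obtain ⟨C, hC, hCf⟩ := ih
    refine ⟨max (deg b c u / b u v) 0 * C, mul_nonneg (le_max_right _ _) hC, fun f hf => ?_⟩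
    calc f v ≤ max (deg b c u / b u v) 0 * f u := apply_le_mul_apply_of_weight_pos hb0 hbs hf huv
      _ ≤ max (deg b c u / b u v) 0 * (C * f x) :=
        mul_le_mul_of_nonneg_left (hCf f hf) (le_max_right _ _)
      _ = _ := (mul_assoc _ _ _).symm

end Harmonic

section Kset

variable {b : X → X → ℝ} {c : X → ℝ} {x₀ : X} {f u : X → ℝ}

lemma Kset_nonneg (hf : f ∈ Kset b c x₀) : 0 ≤ f :=
  closure_minimal (t := Set.Ici 0) (fun _ hg => hg.1.2.2.1) isClosed_Ici hf

lemma Kset_apply_base (hf : f ∈ Kset b c x₀) : f x₀ = 1 :=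
  closure_minimal (t := {g : X → ℝ | g x₀ = 1}) (fun _ hg => hg.2)
    (isClosed_eq (continuous_apply x₀) continuous_const) hf

theorem exists_forall_Kset_le_mul (hb0 : ∀ x y, 0 ≤ b x y) (hbs : ∀ x, Summable (b x))
    (hconn : Connected b) (x y : X) :
    ∃ C, ∀ f ∈ Kset b c x₀, f y ≤ C * f x := by
  obtain ⟨C, -, hC⟩ := exists_forall_Hplus_le_mul (c := c) hb0 hbs hconn x y
  exact ⟨C, fun f hf => closure_minimal (t := {g : X → ℝ | g y ≤ C * g x}) (fun g hg => hC g hg.1)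
    (isClosed_le (continuous_apply y) ((continuous_apply x).const_smul C)) hf⟩

theorem Kset_pos (hb0 : ∀ x y, 0 ≤ b x y) (hbs : ∀ x, Summable (b x))
    (hconn : Connected b) (hf : f ∈ Kset b c x₀) (x : X) : 0 < f x := by
  obtain ⟨C, hC⟩ := exists_forall_Kset_le_mul hb0 hbs hconn (x₀ := x₀) x x₀
  have h : 1 ≤ C * f x := (Kset_apply_base hf).symm.trans_le (hC f hf)
  have hx : 0 ≤ f x := Kset_nonneg hf x
  exact hx.lt_of_ne fun h0 => by rw [← h0, mul_zero] at h; exact zero_lt_one.not_ge h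

theorem exists_forall_Kset_apply_le (hb0 : ∀ x y, 0 ≤ b x y) (hbs : ∀ x, Summable (b x))
    (hconn : Connected b) (x : X) :
    ∃ M, ∀ f ∈ Kset b c x₀, f x ≤ M := by
  obtain ⟨C, hC⟩ := exists_forall_Kset_le_mul hb0 hbs hconn (x₀ := x₀) x₀ x
  exact ⟨C, fun f hf => by simpa [Kset_apply_base hf] using hC f hf⟩

theorem exists_forall_Kset_le_apply (hb0 : ∀ x y, 0 ≤ b x y) (hbs : ∀ x, Summable (b x))
    (hconn : Connected b) (x : X) :
    ∃ m, 0 < m ∧ ∀ f ∈ Kset b c x₀, m ≤ f x := by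
  obtain ⟨C, hC⟩ := exists_forall_Kset_le_mul hb0 hbs hconn (x₀ := x₀) x x₀
  refine ⟨(max C 1)⁻¹, by positivity, fun f hf => ?_⟩
  rw [inv_le_iff_one_le_mul₀' (by positivity)]
  calc 1 = f x₀ := (Kset_apply_base hf).symm
    _ ≤ C * f x := hC f hf
    _ ≤ max C 1 * f x := mul_le_mul_of_nonneg_right (le_max_left _ _) (Kset_nonneg hf x)

theorem isCompact_Kset (hb0 : ∀ x y, 0 ≤ b x y) (hbs : ∀ x, Summable (b x))
    (hconn : Connected b) :
    IsCompact (Kset b c x₀) := by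
  choose M hM using exists_forall_Kset_apply_le hb0 hbs hconn (c := c) (x₀ := x₀)
  exact (isCompact_univ_pi fun x => isCompact_Icc).of_isClosed_subset isClosed_closure
    fun f hf => Set.mem_univ_pi.2 fun x => ⟨Kset_nonneg hf x, hM x f hf⟩

theorem convex_Kset (hb0 : ∀ x y, 0 ≤ b x y) (hbs : ∀ x, Summable (b x)) :
    Convex ℝ (Kset b c x₀) := by
  refine Convex.closure fun f₁ hf₁ f₂ hf₂ s t hs ht hst => ?_
  have hval : (s • f₁ + t • f₂) x₀ = 1 := by simp [hf₁.2, hf₂.2, hst]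
  refine ⟨smul_add_smul_mem_Hplus hb0 hbs hf₁.1 hf₂.1 ?_ ?_, hval⟩
  · exact add_nonneg (smul_nonneg hs hf₁.1.2.2.1) (smul_nonneg ht hf₂.1.2.2.1)
  · exact fun h => one_ne_zero (hval.symm.trans (congrFun h x₀))

theorem inv_smul_mem_Kset (hb0 : ∀ x y, 0 ≤ b x y) (hbs : ∀ x, Summable (b x))
    {L : (X → ℝ) → X → ℝ} (hL : Continuous L)
    (hLH : ∀ f ∈ Hplus b c, f x₀ = 1 → L f ∈ Hplus b c)
    (hLpos : ∀ f ∈ Kset b c x₀, 0 < L f x₀) (hu : u ∈ Kset b c x₀) :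
    (L u x₀)⁻¹ • L u ∈ Kset b c x₀ := by
  have hcont : ContinuousOn (fun f => (L f x₀)⁻¹ • L f) (Kset b c x₀) :=
    (((continuous_apply x₀).comp hL).continuousOn.inv₀ fun f hf => (hLpos f hf).ne').smul
      hL.continuousOn
  have hmaps : Set.MapsTo (fun f => (L f x₀)⁻¹ • L f) {f | f ∈ Hplus b c ∧ f x₀ = 1}
      (Kset b c x₀) := fun f hf => by
    have hpos := hLpos f (subset_closure hf)
    exact subset_closure ⟨smul_mem_Hplus hb0 hbs (hLH f hf.1 hf.2) (inv_pos.2 hpos),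
      inv_mul_cancel₀ hpos.ne'⟩
  simpa [Kset, closure_closure] using hmaps.closure_of_continuousOn hcont hu

theorem inv_smul_shift_mem_Kset (hb0 : ∀ x y, 0 ≤ b x y) (hbs : ∀ x, Summable (b x))
    (hconn : Connected b) (hH : HInvOn b c (Set.univ : Set G)) (hu : u ∈ Kset b c x₀) (g : G) :
    (shift g u x₀)⁻¹ • shift g u ∈ Kset b c x₀ :=
  inv_smul_mem_Kset hb0 hbs (continuous_shift g) (fun _ hf _ => shift_mem_Hplus hH hf g)
    (fun _ hf => Kset_pos hb0 hbs hconn hf _) hu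

theorem exists_mem_Kset_apply_smul_eq (hb0 : ∀ x y, 0 ≤ b x y) (hbs : ∀ x, Summable (b x))
    (hconn : Connected b) (hH : HInvOn b c (Set.univ : Set G)) (hu : u ∈ Kset b c x₀) (a : G) :
    ∃ v ∈ Kset b c x₀, ∀ y, u (a • y) = u (a • x₀) * v y := by
  refine ⟨_, inv_smul_shift_mem_Kset hb0 hbs hconn hH hu a⁻¹, fun y => ?_⟩
  simp [(Kset_pos hb0 hbs hconn hu (a • x₀)).ne']

theorem Kset_apply_mul_smul_le (hb0 : ∀ x y, 0 ≤ b x y) (hbs : ∀ x, Summable (b x))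
    (hconn : Connected b) (hH : HInvOn b c (Set.univ : Set G)) {g h : G} {M B : ℝ}
    (hg : ∀ f ∈ Kset b c x₀, f (g • x₀) ≤ M) (hh : ∀ f ∈ Kset b c x₀, f (h • x₀) ≤ B) :
    ∀ f ∈ Kset b c x₀, f ((g * h) • x₀) ≤ M * B := by
  intro f hf
  obtain ⟨v, hv, hfv⟩ := exists_mem_Kset_apply_smul_eq hb0 hbs hconn hH hf g
  rw [mul_smul, hfv]
  exact mul_le_mul (hg f hf) (hh v hv) (Kset_nonneg hv _) ((Kset_nonneg hf _).trans (hg f hf))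

theorem le_Kset_apply_mul_smul (hb0 : ∀ x y, 0 ≤ b x y) (hbs : ∀ x, Summable (b x))
    (hconn : Connected b) (hH : HInvOn b c (Set.univ : Set G)) {g h : G} {m B : ℝ} (hm : 0 ≤ m)
    (hg : ∀ f ∈ Kset b c x₀, m ≤ f (g • x₀)) (hh : ∀ f ∈ Kset b c x₀, B ≤ f (h • x₀)) :
    ∀ f ∈ Kset b c x₀, m * B ≤ f ((g * h) • x₀) := by
  intro f hf
  obtain ⟨v, hv, hfv⟩ := exists_mem_Kset_apply_smul_eq hb0 hbs hconn hH hf g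
  rw [mul_smul, hfv]
  exact mul_le_mul_of_nonneg (hg f hf) (hh v hv) hm (Kset_nonneg hv _)

theorem Kset_apply_pow_smul_le (hb0 : ∀ x y, 0 ≤ b x y) (hbs : ∀ x, Summable (b x))
    (hconn : Connected b) (hH : HInvOn b c (Set.univ : Set G)) {g : G} {M : ℝ}
    (hg : ∀ f ∈ Kset b c x₀, f (g • x₀) ≤ M) (n : ℕ) :
    ∀ f ∈ Kset b c x₀, f ((g ^ n) • x₀) ≤ M ^ n := by
  induction n with
  | zero => exact fun f hf => by simp [Kset_apply_base hf]
  | succ n ih =>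
    rw [pow_succ', pow_succ']
    exact Kset_apply_mul_smul_le hb0 hbs hconn hH hg ih

theorem le_Kset_apply_pow_smul (hb0 : ∀ x y, 0 ≤ b x y) (hbs : ∀ x, Summable (b x))
    (hconn : Connected b) (hH : HInvOn b c (Set.univ : Set G)) {g : G} {m : ℝ} (hm : 0 ≤ m)
    (hg : ∀ f ∈ Kset b c x₀, m ≤ f (g • x₀)) (n : ℕ) :
    ∀ f ∈ Kset b c x₀, m ^ n ≤ f ((g ^ n) • x₀) := by
  induction n with
  | zero => exact fun f hf => by simp [Kset_apply_base hf]
  | succ n ih =>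
    rw [pow_succ', pow_succ']
    exact le_Kset_apply_mul_smul hb0 hbs hconn hH hm hg ih

theorem shift_eq_smul_of_mem_extremePoints (hb0 : ∀ x y, 0 ≤ b x y)
    (hbs : ∀ x, Summable (b x)) (hconn : Connected b) (hH : HInvOn b c (Set.univ : Set G))
    {z : G} {D : ℝ} (hD : 0 < D) (hzD : ∀ f ∈ Kset b c x₀, ∀ x, shift z f x ≤ D * f x)
    (hu : u ∈ (Kset b c x₀).extremePoints ℝ) : shift z u = shift z u x₀ • u := by
  obtain ⟨ε, hε, hεD⟩ : ∃ ε : ℝ, 0 < ε ∧ ε * D = 2⁻¹ :=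
    ⟨(2 * D)⁻¹, by positivity, by rw [mul_inv, mul_assoc, inv_mul_cancel₀ hD.ne', mul_one]⟩
  set L : (X → ℝ) → X → ℝ := fun f => (1 : ℝ) • f + (-ε) • shift z f
  have hLhalf : ∀ f ∈ Kset b c x₀, ∀ x, 2⁻¹ * f x ≤ L f x := by
    intro f hf x
    have := mul_le_mul_of_nonneg_left (hzD f hf x) hε.le
    rw [← mul_assoc, hεD] at this
    simp only [L, Pi.add_apply, Pi.smul_apply, smul_eq_mul]
    linarith
  have hLpos : ∀ f ∈ Kset b c x₀, 0 < L f x₀ := fun f hf =>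
    (mul_pos (by norm_num) (Kset_pos hb0 hbs hconn hf x₀)).trans_le (hLhalf f hf x₀)
  have hp : (L u x₀)⁻¹ • L u ∈ Kset b c x₀ := by
    refine inv_smul_mem_Kset hb0 hbs ((continuous_id.const_smul (1 : ℝ)).add
      ((continuous_shift z).const_smul (-ε))) (fun f hf hf1 => ?_) hLpos hu.1
    have hfK : f ∈ Kset b c x₀ := subset_closure ⟨hf, hf1⟩
    refine smul_add_smul_mem_Hplus hb0 hbs hf (shift_mem_Hplus hH hf z)
      (fun x => (mul_nonneg (by norm_num) (Kset_nonneg hfK x)).trans (hLhalf f hfK x))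
      fun h0 => (hLpos f hfK).ne' (congrFun h0 x₀)
  have hw := inv_smul_shift_mem_Kset hb0 hbs hconn hH hu.1 z
  have hγ : 0 < shift z u x₀ := Kset_pos hb0 hbs hconn hu.1 _
  -- `u` is a proper convex combination of the normalizations of `L u` and `T_z u`.
  have hseg : u ∈ openSegment ℝ ((L u x₀)⁻¹ • L u) ((shift z u x₀)⁻¹ • shift z u) := by
    refine ⟨L u x₀, ε * shift z u x₀, hLpos u hu.1, by positivity, ?_, ?_⟩
    · simp [L, Kset_apply_base hu.1]
    · rw [smul_inv_smul₀ (hLpos u hu.1).ne', smul_smul, mul_assoc, mul_inv_cancel₀ hγ.ne',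
        mul_one]
      simp [L]
  have hwu := ((mem_extremePoints.1 hu).2 _ hp _ hw hseg).2
  calc shift z u = shift z u x₀ • ((shift z u x₀)⁻¹ • shift z u) := (smul_inv_smul₀ hγ.ne' _).symm
    _ = shift z u x₀ • u := by rw [hwu]

end Kset

section Invariance

variable {b : X → X → ℝ} {c : X → ℝ} {x₀ : X} {u : X → ℝ}

/-- As `z⁻¹ * h ≡ h * z⁻¹` modulo `N`, the Harnack constant for `(h • v, z⁻¹ • h • v)` is the one
for `(v, z⁻¹ • v)`, and by cocompactness `v` ranges over a finite set. -/
theorem exists_shift_le_mul_of_mem_Qsub (hb0 : ∀ x y, 0 ≤ b x y) (hbs : ∀ x, Summable (b x))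
    (hconn : Connected b) (hH : HInvOn b c (Set.univ : Set G)) (hcocpt : CocompactAction G X)
    {N : Subgroup G} [N.Normal] (hN : N ≤ shiftFixingSubgroup G (Kset b c x₀)) {z : G}
    (hz : z ∈ Qsub N) : ∃ D, 0 < D ∧ ∀ f ∈ Kset b c x₀, ∀ x, shift z f x ≤ D * f x := by
  obtain ⟨V, hV⟩ := hcocpt
  choose C hC using fun v => exists_forall_Kset_le_mul hb0 hbs hconn (c := c) (x₀ := x₀) v (z⁻¹ • v)
  obtain ⟨M, hM⟩ := (V.image C).exists_le
  refine ⟨max M 1, by positivity, fun f hf x => ?_⟩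
  obtain ⟨h, v, hv, rfl⟩ := hV x
  obtain ⟨w, hw, hfw⟩ := exists_mem_Kset_apply_smul_eq hb0 hbs hconn hH hf h
  have hcomm : ((z⁻¹ * h : G) : G ⧸ N) = (h * z⁻¹ : G) := by
    rw [QuotientGroup.mk_mul, QuotientGroup.mk_mul]
    exact (Subgroup.mem_center_iff.1 (Subgroup.mem_comap.1 (inv_mem hz)) _).symm
  calc shift z f (h • v) = f (h • x₀) * w (z⁻¹ • v) := by
        rw [shift_apply, smul_smul, apply_smul_eq_of_mk_eq_s8 hN hf hcomm, mul_smul, hfw]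
    _ ≤ f (h • x₀) * (max M 1 * w v) := by
        refine mul_le_mul_of_nonneg_left ((hC v w hw).trans ?_) (Kset_nonneg hf _)
        exact mul_le_mul_of_nonneg_right
          ((hM _ (Finset.mem_image_of_mem C hv)).trans (le_max_left _ _)) (Kset_nonneg hw v)
    _ = max M 1 * f (h • v) := by rw [hfw v]; ring

lemma apply_pow_mul_pow_smul_eq {N : Subgroup G} [N.Normal]
    (hN : N ≤ shiftFixingSubgroup G (Kset b c x₀)) {g w : G} (hz : ⁅g, w⁆ ∈ Qsub N)
    (hu : u ∈ Kset b c x₀) {γ : ℝ} (hγ : shift ⁅g, w⁆ u = γ • u) (n : ℕ) :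
    u ((w ^ n * g ^ n) • x₀) = γ ^ (n * n) * u ((g ^ n * w ^ n) • x₀) := by
  have hcomm : ((⁅g, w⁆ ^ (n * n) * (w ^ n * g ^ n) : G) : G ⧸ N) = (g ^ n * w ^ n : G) := by
    have hmk : ((⁅g, w⁆ : G) : G ⧸ N) = ⁅(g : G ⧸ N), (w : G ⧸ N)⁆ :=
      map_commutatorElement (QuotientGroup.mk' N) g w
    have hz' : ⁅(g : G ⧸ N), (w : G ⧸ N)⁆ ∈ Subgroup.center (G ⧸ N) := hmk ▸ hz
    simpa [hmk] using (pow_mul_pow_eq_commutatorElement_pow_mul hz' n n).symm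
  calc u ((w ^ n * g ^ n) • x₀)
      = shift (⁅g, w⁆ ^ (n * n)) u ((⁅g, w⁆ ^ (n * n) * (w ^ n * g ^ n)) • x₀) := by
        rw [shift_apply, smul_smul, inv_mul_cancel_left]
    _ = γ ^ (n * n) * u ((g ^ n * w ^ n) • x₀) := by
        rw [shift_pow_eq_pow_smul hγ, Pi.smul_apply, smul_eq_mul,
          apply_smul_eq_of_mk_eq_s8 hN hu hcomm]

/-- By `apply_pow_mul_pow_smul_eq`, `γ^{n²}` is a ratio of two values of `u` that are bounded
above and below exponentially in `n`. -/
theorem le_one_of_shift_commutatorElement_eq_smul (hb0 : ∀ x y, 0 ≤ b x y)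
    (hbs : ∀ x, Summable (b x)) (hconn : Connected b) (hH : HInvOn b c (Set.univ : Set G))
    {N : Subgroup G} [N.Normal] (hN : N ≤ shiftFixingSubgroup G (Kset b c x₀)) {g w : G}
    (hz : ⁅g, w⁆ ∈ Qsub N) (hu : u ∈ Kset b c x₀) {γ : ℝ} (hγ : shift ⁅g, w⁆ u = γ • u) :
    γ ≤ 1 := by
  have hγpos : 0 < γ := by
    have h := congrFun hγ x₀
    rw [Pi.smul_apply, Kset_apply_base hu, smul_eq_mul, mul_one] at h
    rw [← h]
    exact Kset_pos hb0 hbs hconn hu _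
  obtain ⟨Mg, hMg⟩ := exists_forall_Kset_apply_le hb0 hbs hconn (c := c) (x₀ := x₀) (g • x₀)
  obtain ⟨Mw, hMw⟩ := exists_forall_Kset_apply_le hb0 hbs hconn (c := c) (x₀ := x₀) (w • x₀)
  obtain ⟨mg, hmg, hmg'⟩ := exists_forall_Kset_le_apply hb0 hbs hconn (c := c) (x₀ := x₀) (g • x₀)
  obtain ⟨mw, hmw, hmw'⟩ := exists_forall_Kset_le_apply hb0 hbs hconn (c := c) (x₀ := x₀) (w • x₀)
  refine le_one_of_forall_pow_mul_self_le (C := Mw * Mg / (mg * mw)) fun n => ?_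
  have key := apply_pow_mul_pow_smul_eq hN hz hu hγ n
  have hup := Kset_apply_mul_smul_le hb0 hbs hconn hH (Kset_apply_pow_smul_le hb0 hbs hconn hH
    hMw n) (Kset_apply_pow_smul_le hb0 hbs hconn hH hMg n) u hu
  have hlow := le_Kset_apply_mul_smul hb0 hbs hconn hH (by positivity)
    (le_Kset_apply_pow_smul hb0 hbs hconn hH hmg.le hmg' n)
    (le_Kset_apply_pow_smul hb0 hbs hconn hH hmw.le hmw' n) u hu
  rw [div_pow, le_div_iff₀ (by positivity), mul_pow, mul_pow]
  calc γ ^ (n * n) * (mg ^ n * mw ^ n) ≤ γ ^ (n * n) * u ((g ^ n * w ^ n) • x₀) :=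
        mul_le_mul_of_nonneg_left hlow (by positivity)
    _ = u ((w ^ n * g ^ n) • x₀) := key.symm
    _ ≤ Mw ^ n * Mg ^ n := hup

theorem shift_commutatorElement_eq_of_mem_extremePoints (hb0 : ∀ x y, 0 ≤ b x y)
    (hbs : ∀ x, Summable (b x)) (hconn : Connected b) (hH : HInvOn b c (Set.univ : Set G))
    (hcocpt : CocompactAction G X) {N : Subgroup G} [N.Normal]
    (hN : N ≤ shiftFixingSubgroup G (Kset b c x₀)) {g w : G} (hz : ⁅g, w⁆ ∈ Qsub N)
    (hu : u ∈ (Kset b c x₀).extremePoints ℝ) : shift ⁅g, w⁆ u = u := by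
  obtain ⟨D, hD, hzD⟩ := exists_shift_le_mul_of_mem_Qsub hb0 hbs hconn hH hcocpt hN hz
  have heig := shift_eq_smul_of_mem_extremePoints hb0 hbs hconn hH hD hzD hu
  have hγ : 0 < shift ⁅g, w⁆ u x₀ := Kset_pos hb0 hbs hconn hu.1 _
  have hle := le_one_of_shift_commutatorElement_eq_smul hb0 hbs hconn hH hN hz hu.1 heig
  have hge : (shift ⁅g, w⁆ u x₀)⁻¹ ≤ 1 := by
    refine le_one_of_shift_commutatorElement_eq_smul hb0 hbs hconn hH hN (g := w) (w := g)
      ?_ hu.1 ?_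
    · rw [← commutatorElement_inv]
      exact inv_mem hz
    · rw [← commutatorElement_inv]
      exact shift_inv_eq_inv_smul hγ.ne' heig
  rw [heig, le_antisymm hle ((inv_le_one₀ hγ).1 hge), one_smul]

theorem lowerCentralSeries_succ_le_of_succ_succ_le (hb0 : ∀ x y, 0 ≤ b x y)
    (hbs : ∀ x, Summable (b x)) (hconn : Connected b) (hH : HInvOn b c (Set.univ : Set G))
    (hcocpt : CocompactAction G X) (m : ℕ)
    (h : (⊤ : Subgroup G).lowerCentralSeries (m + 2) ≤ shiftFixingSubgroup G (Kset b c x₀)) :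
    (⊤ : Subgroup G).lowerCentralSeries (m + 1) ≤ shiftFixingSubgroup G (Kset b c x₀) := by
  rw [Subgroup.lowerCentralSeries_succ, Subgroup.commutator_le]
  intro p hp q _
  have hz : ⁅p, q⁆ ∈ Qsub ((⊤ : Subgroup G).lowerCentralSeries (m + 2)) :=
    mem_Qsub_iff.2 fun y => Subgroup.commutator_mem_commutator
      (Subgroup.commutator_mem_commutator hp (Subgroup.mem_top q)) (Subgroup.mem_top y)
  have hconvex : Convex ℝ {f : X → ℝ | shift ⁅p, q⁆ f = f} := fun f hf f' hf' s t _ _ _ => by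
    change s • shift ⁅p, q⁆ f + t • shift ⁅p, q⁆ f' = _
    rw [hf.out, hf'.out]
  exact mem_shiftFixingSubgroup.2 <| subset_of_extremePoints_subset
    (isCompact_Kset hb0 hbs hconn) (convex_Kset hb0 hbs)
    (isClosed_eq (continuous_shift _) continuous_id) hconvex
    fun u hu => shift_commutatorElement_eq_of_mem_extremePoints hb0 hbs hconn hH hcocpt h hz hu

end Invariance

theorem Kset_commutator_invariant_general {X : Type*} {G : Type*} [Group G]
    [MulAction G X] [Group.IsNilpotent G]
    (b : X → X → ℝ) (c : X → ℝ)
    (hb0 : ∀ x y, 0 ≤ b x y) (hbs : ∀ x, Summable (b x))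
    (hconn : Connected b) (hcocpt : CocompactAction G X)
    (hH : HInvOn b c (Set.univ : Set G)) (x₀ : X) :
    ∀ f ∈ Kset b c x₀, ∀ g ∈ commutator G, shift g f = f := by
  obtain ⟨n, hn⟩ := Subgroup.nilpotent_iff_lowerCentralSeries.1 ‹Group.IsNilpotent G›
  have hle : (⊤ : Subgroup G).lowerCentralSeries 1 ≤ shiftFixingSubgroup G (Kset b c x₀) :=
    Nat.decreasingInduction (motive := fun k _ =>
        (⊤ : Subgroup G).lowerCentralSeries (k + 1) ≤ shiftFixingSubgroup G (Kset b c x₀))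
      (fun k _ => lowerCentralSeries_succ_le_of_succ_succ_le hb0 hbs hconn hH hcocpt k)
      ((Subgroup.lowerCentralSeries_antitone _ n.le_succ).trans (hn ▸ bot_le)) n.zero_le
  rw [Subgroup.top_lowerCentralSeries_one] at hle
  exact fun f hf g hg => mem_shiftFixingSubgroup.1 (hle hg) f hf

/-- **Margulis' theorem for group actions, part (a).**
Every element of `𝓚` is `[G,G]`-invariant. -/
theorem Kset_commutator_invariant {X : Type*} [Countable X] {G : Type*} [Group G]
    [MulAction G X] [Group.IsNilpotent G]
    (b : X → X → ℝ) (c : X → ℝ)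
    (hb0 : ∀ x y, 0 ≤ b x y) (hbd : ∀ x, b x x = 0) (hbs : ∀ x, Summable (b x))
    (hconn : Connected b) (hcocpt : CocompactAction G X)
    (hH : HInvOn b c (Set.univ : Set G)) (x₀ : X) :
    ∀ f ∈ Kset b c x₀, ∀ g ∈ commutator G, shift g f = f :=
  Kset_commutator_invariant_general b c hb0 hbs hconn hcocpt hH x₀

end GraphPaper
end
end

section
/- (Liouville property) Let b be a weight function such that (b,0) is a locally finite, connected graph over X, and let G be a nilpotent group acting cocompactly on X such that H_{b,0} is G-invariant. Then every bounded harmonic function f : X → ℝ is constant. -/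
open MeasureTheory
open scoped BigOperators

noncomputable section

namespace GraphPaper

variable {X : Type*}

variable {G : Type*} [Group G] [MulAction G X]

/-! Induct along the upper central series `Zᵢ`: if `f` is `Zᵢ`-invariant and `g ∈ Zᵢ₊₁`, then
`f (a • g • x) = f (g • a • x)` for all `a`. The harmonic functions bounded by `C` with this property
form a compact family, closed under translation by `G` and under negation. By cocompactness the
increment `h (g • x) - h x` attains its supremum `s` over the family and all `x`, at some `h₀`.
The increment of `h₀` is harmonic, hence constantly `s` by the maximum principle, and since `h₀` is
bounded, `s ≤ 0`. Applied to `h` and `-h` this gives `h (g • x) = h x`. Once `f` is `G`-invariant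
it attains its maximum on a finite fundamental set, hence is constant. -/

def IsHarmonic (b : X → X → ℝ) (h : X → ℝ) : Prop :=
  schrodinger b (fun _ => 0) h = 0

lemma schrodinger_neg (b : X → X → ℝ) (c h : X → ℝ) :
    schrodinger b c (-h) = -schrodinger b c h := by
  funext x
  have hterm : ∀ y, b x y * (-h x - -h y) = -(b x y * (h x - h y)) := fun y => by ring
  simp only [schrodinger, Pi.neg_apply, hterm, tsum_neg, mul_neg, neg_add]

lemma IsHarmonic.neg {b : X → X → ℝ} {h : X → ℝ} (hh : IsHarmonic b h) : IsHarmonic b (-h) := by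
  rw [IsHarmonic, schrodinger_neg, hh, neg_zero]

section LocallyFinite

variable {b : X → X → ℝ} (hb0 : ∀ x y, 0 ≤ b x y) (hlf : ∀ x, {y | 0 < b x y}.Finite)
include hb0 hlf

lemma eq_zero_of_notMem_neighbors {x y : X} (hy : y ∉ (hlf x).toFinset) : b x y = 0 :=
  le_antisymm (not_lt.mp (by simpa using hy)) (hb0 x y)

lemma inDom_of_locallyFinite (h : X → ℝ) : InDom b h := fun x =>
  summable_of_ne_finset_zero fun y hy => by
    rw [eq_zero_of_notMem_neighbors hb0 hlf hy, zero_mul]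

lemma schrodinger_zero_apply (h : X → ℝ) (x : X) :
    schrodinger b (fun _ => 0) h x = ∑ y ∈ (hlf x).toFinset, b x y * (h x - h y) := by
  simp only [schrodinger, zero_mul, add_zero]
  exact tsum_eq_sum fun y hy => by rw [eq_zero_of_notMem_neighbors hb0 hlf hy, zero_mul]

lemma isHarmonic_iff {h : X → ℝ} :
    IsHarmonic b h ↔ ∀ x, ∑ y ∈ (hlf x).toFinset, b x y * (h x - h y) = 0 := by
  simp only [IsHarmonic, funext_iff, schrodinger_zero_apply hb0 hlf, Pi.zero_apply]

lemma IsHarmonic.sub {h k : X → ℝ} (hh : IsHarmonic b h) (hk : IsHarmonic b k) :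
    IsHarmonic b (h - k) := by
  rw [isHarmonic_iff hb0 hlf] at *
  intro x
  have hsplit : ∀ y, b x y * ((h - k) x - (h - k) y) = b x y * (h x - h y) - b x y * (k x - k y) :=
    fun y => by simp only [Pi.sub_apply]; ring
  simp only [hsplit, Finset.sum_sub_distrib, hh x, hk x, sub_zero]

lemma isClosed_setOf_isHarmonic : IsClosed {h : X → ℝ | IsHarmonic b h} := by
  simp only [isHarmonic_iff hb0 hlf, Set.ofPred_forall]
  exact isClosed_iInter fun x => isClosed_eq (by fun_prop) continuous_const

lemma IsHarmonic.eq_of_forall_le (hconn : Connected b) {h : X → ℝ} (hh : IsHarmonic b h)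
    {v : X} (hmax : ∀ x, h x ≤ h v) (x : X) : h x = h v := by
  induction hconn v x with
  | refl => rfl
  | @tail p q _ hpq ih =>
    have hterms := (Finset.sum_eq_zero_iff_of_nonneg fun y _ =>
      mul_nonneg (hb0 p y) (sub_nonneg.mpr (ih ▸ hmax y))).mp ((isHarmonic_iff hb0 hlf).mp hh p)
    have := (mul_eq_zero.mp (hterms q ((hlf p).mem_toFinset.mpr hpq))).resolve_left hpq.ne'
    linarith

lemma IsHarmonic.comp_smul (hH : HInvOn b (fun _ => (0 : ℝ)) (Set.univ : Set G)) {h : X → ℝ}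
    (hh : IsHarmonic b h) (a : G) : IsHarmonic b fun x => h (a • x) := by
  have h_shift := (hH a⁻¹ (Set.mem_univ _) h (inDom_of_locallyFinite hb0 hlf h)).2
  have h_comp : shift a⁻¹ h = fun x => h (a • x) := funext fun x => by simp [shift]
  rw [h_comp] at h_shift
  rw [IsHarmonic, h_shift, hh]
  rfl

end LocallyFinite

lemma nonpos_of_apply_smul_sub_eq [Nonempty X] {h : X → ℝ} {C s : ℝ} (hC : ∀ x, |h x| ≤ C)
    {g : G} (hs : ∀ x, h (g • x) - h x = s) : s ≤ 0 := by
  obtain ⟨x⟩ := ‹Nonempty X›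
  have hpow : ∀ n : ℕ, h ((g ^ n) • x) - h x = n * s := by
    intro n
    induction n with
    | zero => simp
    | succ n ih =>
      rw [pow_succ', mul_smul]
      push_cast
      linarith [hs ((g ^ n) • x)]
  by_contra! hpos
  obtain ⟨n, hn⟩ := exists_nat_gt (2 * C / s)
  rw [div_lt_iff₀ hpos] at hn
  linarith [hpow n, (abs_le.mp (hC ((g ^ n) • x))).2, (abs_le.mp (hC x)).1]

def harmonicCommuting (b : X → X → ℝ) (C : ℝ) (g : G) : Set (X → ℝ) :=
  {h | IsHarmonic b h ∧ (∀ x, |h x| ≤ C) ∧ ∀ a : G, ∀ x, h (a • g • x) = h (g • a • x)}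

section HarmonicCommuting

variable {b : X → X → ℝ} {C : ℝ} {g : G}

lemma neg_mem_harmonicCommuting {h : X → ℝ} (hh : h ∈ harmonicCommuting b C g) :
    -h ∈ harmonicCommuting b C g := by
  obtain ⟨hharm, hC, hcomm⟩ := hh
  exact ⟨hharm.neg, fun x => by simpa using hC x, fun a x => by simp [hcomm a x]⟩

variable (hb0 : ∀ x y, 0 ≤ b x y) (hlf : ∀ x, {y | 0 < b x y}.Finite)
include hb0 hlf

lemma isCompact_harmonicCommuting : IsCompact (harmonicCommuting b C g) := by
  refine (isCompact_univ_pi fun _ => isCompact_Icc (a := -C) (b := C)).of_isClosed_subset ?_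
    fun h hh x _ => abs_le.mp (hh.2.1 x)
  have hbounded : IsClosed {h : X → ℝ | ∀ x, |h x| ≤ C} := by
    simp only [Set.ofPred_forall]
    exact isClosed_iInter fun x => isClosed_le (by fun_prop) continuous_const
  have hcommuting : IsClosed {h : X → ℝ | ∀ a : G, ∀ x, h (a • g • x) = h (g • a • x)} := by
    simp only [Set.ofPred_forall]
    exact isClosed_iInter fun a => isClosed_iInter fun x => isClosed_eq (by fun_prop) (by fun_prop)
  exact (isClosed_setOf_isHarmonic hb0 hlf).inter (hbounded.inter hcommuting)

variable (hH : HInvOn b (fun _ => (0 : ℝ)) (Set.univ : Set G))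
include hH

lemma comp_smul_mem_harmonicCommuting {h : X → ℝ} (hh : h ∈ harmonicCommuting b C g) (c : G) :
    (fun x => h (c • x)) ∈ harmonicCommuting b C g := by
  obtain ⟨hharm, hC, hcomm⟩ := hh
  refine ⟨hharm.comp_smul hb0 hlf hH c, fun x => hC _, fun a x => ?_⟩
  calc h (c • a • g • x) = h ((c * a) • g • x) := by rw [mul_smul]
    _ = h (g • (c * a) • x) := hcomm _ _
    _ = h (c • g • a • x) := by rw [mul_smul, hcomm c]

lemma apply_smul_le_of_mem_harmonicCommuting (hconn : Connected b)
    (hcocpt : CocompactAction G X) {h : X → ℝ} (hh : h ∈ harmonicCommuting b C g) (x : X) :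
    h (g • x) ≤ h x := by
  obtain ⟨V, hV⟩ := hcocpt
  have hVne : V.Nonempty := by obtain ⟨_, v, hv, -⟩ := hV x; exact ⟨v, hv⟩
  obtain ⟨h₀, hh₀, hmax⟩ := (isCompact_harmonicCommuting hb0 hlf).exists_isMaxOn ⟨h, hh⟩
    (f := fun k => V.sup' hVne fun v => k (g • v) - k v)
    (Continuous.finset_sup'_apply hVne fun v _ => by fun_prop).continuousOn
  obtain ⟨v₀, -, hv₀⟩ := Finset.exists_mem_eq_sup' hVne fun v => h₀ (g • v) - h₀ v
  -- translating by `c` moves the increment at `c • v` to `v`, where the sup over `V` sees it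
  have hle : ∀ k ∈ harmonicCommuting b C g, ∀ y, k (g • y) - k y ≤ h₀ (g • v₀) - h₀ v₀ := by
    intro k hk y
    obtain ⟨c, v, hv, rfl⟩ := hV y
    calc k (g • c • v) - k (c • v) = k (c • g • v) - k (c • v) := by rw [hk.2.2 c v]
      _ ≤ V.sup' hVne fun v => k (c • g • v) - k (c • v) :=
          Finset.le_sup' (fun v => k (c • g • v) - k (c • v)) hv
      _ ≤ V.sup' hVne fun v => h₀ (g • v) - h₀ v :=
          hmax (comp_smul_mem_harmonicCommuting hb0 hlf hH hk c)
      _ = h₀ (g • v₀) - h₀ v₀ := hv₀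
  have hincr : IsHarmonic b fun y => h₀ (g • y) - h₀ y :=
    (hh₀.1.comp_smul hb0 hlf hH g).sub hb0 hlf hh₀.1
  have hconst := hincr.eq_of_forall_le hb0 hlf hconn (hle h₀ hh₀)
  have : Nonempty X := ⟨x⟩
  linarith [hle h hh x, nonpos_of_apply_smul_sub_eq hh₀.2.1 hconst]

lemma apply_smul_eq_of_mem_harmonicCommuting (hconn : Connected b)
    (hcocpt : CocompactAction G X) {h : X → ℝ} (hh : h ∈ harmonicCommuting b C g) (x : X) :
    h (g • x) = h x := by
  have hneg := apply_smul_le_of_mem_harmonicCommuting hb0 hlf hH hconn hcocpt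
    (neg_mem_harmonicCommuting hh) x
  simp only [Pi.neg_apply, neg_le_neg_iff] at hneg
  exact (apply_smul_le_of_mem_harmonicCommuting hb0 hlf hH hconn hcocpt hh x).antisymm hneg

end HarmonicCommuting

open scoped commutatorElement in
lemma apply_smul_comm_of_mem_upperCentralSeries_succ {α : Type*} {f : X → α} {i : ℕ}
    (hf : ∀ n ∈ Subgroup.upperCentralSeries G i, ∀ x, f (n • x) = f x) {g : G}
    (hg : g ∈ Subgroup.upperCentralSeries G (i + 1)) (a : G) (x : X) :
    f (a • g • x) = f (g • a • x) := by
  have hga : g * a = ⁅g, a⁆ * (a * g) := by group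
  rw [← mul_smul g a x, hga, mul_smul, hf _ (Subgroup.mem_upperCentralSeries_succ_iff.mp hg a),
    mul_smul]

lemma IsHarmonic.eq_of_smul_invariant {b : X → X → ℝ} (hb0 : ∀ x y, 0 ≤ b x y)
    (hlf : ∀ x, {y | 0 < b x y}.Finite) (hconn : Connected b) (hcocpt : CocompactAction G X)
    {h : X → ℝ} (hh : IsHarmonic b h) (hinv : ∀ (g : G) x, h (g • x) = h x) (x y : X) :
    h x = h y := by
  obtain ⟨V, hV⟩ := hcocpt
  have hVne : V.Nonempty := by obtain ⟨_, v, hv, -⟩ := hV x; exact ⟨v, hv⟩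
  obtain ⟨v₀, -, hv₀⟩ := V.exists_max_image h hVne
  have hmax : ∀ z, h z ≤ h v₀ := by
    intro z
    obtain ⟨c, v, hv, rfl⟩ := hV z
    exact (hinv c v).trans_le (hv₀ v hv)
  rw [hh.eq_of_forall_le hb0 hlf hconn hmax x, hh.eq_of_forall_le hb0 hlf hconn hmax y]

theorem liouville_general {X : Type*} {G : Type*} [Group G]
    [MulAction G X] [Group.IsNilpotent G]
    (b : X → X → ℝ)
    (hb0 : ∀ x y, 0 ≤ b x y)
    (hlf : ∀ x : X, {y | 0 < b x y}.Finite) (hconn : Connected b)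
    (hcocpt : CocompactAction G X)
    (hH : HInvOn b (fun _ => (0 : ℝ)) (Set.univ : Set G))
    (f : X → ℝ) (hbound : ∃ C : ℝ, ∀ x, |f x| ≤ C)
    (hharm : schrodinger b (fun _ => (0 : ℝ)) f = 0) :
    ∀ x y : X, f x = f y := by
  obtain ⟨C, hC⟩ := hbound
  have hcentral : ∀ i, ∀ g ∈ Subgroup.upperCentralSeries G i, ∀ x, f (g • x) = f x := by
    intro i
    induction i with
    | zero => simp
    | succ i ih =>
      intro g hg
      exact apply_smul_eq_of_mem_harmonicCommuting hb0 hlf hH hconn hcocpt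
        ⟨hharm, hC, apply_smul_comm_of_mem_upperCentralSeries_succ ih hg⟩
  obtain ⟨n, hn⟩ := Group.IsNilpotent.nilpotent G
  exact IsHarmonic.eq_of_smul_invariant hb0 hlf hconn hcocpt hharm
    fun g => hcentral n g (hn ▸ Subgroup.mem_top g)

/-- **Liouville property.** Every bounded harmonic function for `H_{b,0}`
is constant. -/
theorem liouville {X : Type*} [Countable X] {G : Type*} [Group G]
    [MulAction G X] [Group.IsNilpotent G]
    (b : X → X → ℝ)
    (hb0 : ∀ x y, 0 ≤ b x y) (hbd : ∀ x, b x x = 0) (hbs : ∀ x, Summable (b x))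
    (hlf : ∀ x : X, {y | 0 < b x y}.Finite) (hconn : Connected b)
    (hcocpt : CocompactAction G X)
    (hH : HInvOn b (fun _ => (0 : ℝ)) (Set.univ : Set G))
    (f : X → ℝ) (hbound : ∃ C : ℝ, ∀ x, |f x| ≤ C)
    (hdom : InDom b f) (hharm : schrodinger b (fun _ => (0 : ℝ)) f = 0) :
    ∀ x y : X, f x = f y :=
  liouville_general b hb0 hlf hconn hcocpt hH f hbound hharm

end GraphPaper
end
end
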